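/- arXiv:0911.4545 — 6 statements merged into one kernel-verified Lean document; each statement's English description precedes it below -/
import Mathlib

section
/- Define the star map * : C[a_1,...,a_r] → C[a_1,...,a_{r-1}] by letting f* be the coefficient of the highest power of a_r in f. Then the star map is injective on the space S_w(r) of binary invariants of weight w in r variables; explicitly, for f ∈ S_w(r) one has f(a_1,...,a_r) = (∏_{i=1}^{r-1} (a_r − a_i)^w) · f*(1/(a_r − a_1), ..., 1/(a_r − a_{r-1})). -/
open MvPolynomial

def IsBinaryInvariant (r w : ℕ) (f : MvPolynomial (Fin r) ℂ) : Prop :=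
  ∀ A B C D : ℝ, A * D - B * C = 1 →
    ∀ a : Fin r → ℂ, (∀ i, (C : ℂ) * a i + (D : ℂ) ≠ 0) →
      eval a f =
        eval (fun i => ((A : ℂ) * a i + (B : ℂ)) / ((C : ℂ) * a i + (D : ℂ))) f *
          ∏ i, ((C : ℂ) * a i + (D : ℂ)) ^ w

/-- The star map: the coefficient of the highest power of the last variable. -/
noncomputable def star {n : ℕ} (f : MvPolynomial (Fin (n + 1)) ℂ) : MvPolynomial (Fin n) ℂ :=
  ∑ m ∈ f.support.filter (fun m => m (Fin.last n) = f.degreeOf (Fin.last n)),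
    monomial (Finsupp.comapDomain Fin.castSucc m (Fin.castSucc_injective n).injOn)
      (coeff m f)

open Finset

/-!
The Möbius maps `x ↦ -1/x` and `x ↦ 1/(s - x)` (`s` real) lie in `SL₂(ℝ)`. Invariance under the
first one, after clearing denominators, bounds the degree of `f` in each variable by `w`.
Invariance under the second one then reads `f(a) = ∑ₘ cₘ ∏ᵢ (s - aᵢ)^(w - mᵢ)`; both sides are
polynomials in `s` agreeing at infinitely many points, so this holds for every `s`. At `s = a_r`
only the monomials with `m_r = w` survive, which is the formula for `f` in terms of `f*`. Since
`∏ᵢ (X_r - Xᵢ)` is a nonzero polynomial, the formula determines `f` from `f*`.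
-/

theorem MvPolynomial.eq_of_eval_eq_of_eval_ne_zero {R σ : Type*} [CommRing R] [IsDomain R]
    [Infinite R] {p q : MvPolynomial σ R} (h : MvPolynomial σ R) (hh : h ≠ 0)
    (H : ∀ a : σ → R, eval a h ≠ 0 → eval a p = eval a q) : p = q := by
  have hmul : h * (p - q) = 0 := MvPolynomial.funext fun a => by
    by_cases ha : eval a h = 0
    · simp [ha]
    · simp [H a ha]
  exact sub_eq_zero.1 ((mul_eq_zero.1 hmul).resolve_left hh)

theorem eval_star {n : ℕ} (f : MvPolynomial (Fin (n + 1)) ℂ) (b : Fin n → ℂ) :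
    eval b (star f) =
      ∑ m ∈ f.support with m (Fin.last n) = f.degreeOf (Fin.last n),
        coeff m f * ∏ i : Fin n, b i ^ m i.castSucc := by
  simp only [_root_.star, map_sum, eval_monomial]
  refine sum_congr rfl fun m _ => ?_
  rw [Finsupp.prod_fintype _ _ fun _ => pow_zero _]
  simp [Finsupp.comapDomain_apply]

namespace IsBinaryInvariant

section

variable {n w : ℕ} {f : MvPolynomial (Fin n) ℂ}

theorem eval_eq_eval_neg_inv_mul (hf : IsBinaryInvariant n w f) {a : Fin n → ℂ}
    (ha : ∀ i, a i ≠ 0) : eval a f = eval (fun i => -(a i)⁻¹) f * ∏ i, a i ^ w := by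
  simpa [neg_div] using hf 0 (-1) 1 0 (by norm_num) a (by simpa using ha)

theorem eval_eq_eval_inv_sub_mul (hf : IsBinaryInvariant n w f) {a : Fin n → ℂ} (s : ℝ)
    (ha : ∀ i, a i ≠ s) :
    eval a f = eval (fun i => ((s : ℂ) - a i)⁻¹) f * ∏ i, ((s : ℂ) - a i) ^ w := by
  have hsub : ∀ i, ((-1 : ℝ) : ℂ) * a i + (s : ℂ) = s - a i := fun i => by push_cast; ring
  simpa [hsub, neg_add_eq_sub] using hf 0 1 (-1) s (by norm_num) a fun i => by
    rw [hsub]; exact sub_ne_zero.2 (ha i).symm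

/-- Clearing denominators in `eval_eq_eval_neg_inv_mul` by `∏ aᵢ ^ N`. -/
theorem monomial_mul_eq_sum (hf : IsBinaryInvariant n w f) {N : ℕ}
    (hN : ∀ m ∈ f.support, ∀ j, m j ≤ N) :
    monomial (Finsupp.equivFunOnFinite.symm fun _ => N) 1 * f =
      ∑ m ∈ f.support, monomial (Finsupp.equivFunOnFinite.symm fun j => N + w - m j)
        ((∏ j, (-1 : ℂ) ^ m j) * coeff m f) := by
  refine eq_of_eval_eq_of_eval_ne_zero (∏ j, X j)
    (prod_ne_zero_iff.2 fun j _ => X_ne_zero j) fun a ha => ?_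
  rw [map_prod] at ha
  have ha : ∀ j, a j ≠ 0 := fun j => by simpa using prod_ne_zero_iff.1 ha j (mem_univ j)
  simp only [map_mul, eval_monomial, map_sum, one_mul,
    Finsupp.prod_fintype _ _ fun _ => pow_zero _, Finsupp.coe_equivFunOnFinite_symm]
  rw [hf.eval_eq_eval_neg_inv_mul ha, eval_eq', sum_mul, mul_sum]
  refine sum_congr rfl fun m hm => ?_
  have hpow : ∀ j, a j ^ (N + w - m j) = a j ^ N * a j ^ w * (a j ^ m j)⁻¹ := fun j => by
    rw [pow_sub₀ _ (ha j) ((hN m hm j).trans (Nat.le_add_right N w)), pow_add]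
  have hneg : ∀ j, (-(a j)⁻¹) ^ m j = (-1) ^ m j * (a j ^ m j)⁻¹ := fun j => by
    rw [neg_pow, inv_pow]
  simp only [hpow, hneg, prod_mul_distrib]
  ring

theorem le_of_mem_support (hf : IsBinaryInvariant n w f) {m : Fin n →₀ ℕ}
    (hm : m ∈ f.support) (j : Fin n) : m j ≤ w := by
  by_contra! hlt
  set N := f.totalDegree
  have hN : ∀ m ∈ f.support, ∀ j, m j ≤ N := fun m hm j =>
    (monomial_le_degreeOf j hm).trans (degreeOf_le_totalDegree f j)
  have hcoeff := congrArg (coeff ((Finsupp.equivFunOnFinite.symm fun _ => N) + m))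
    (hf.monomial_mul_eq_sum hN)
  rw [coeff_monomial_mul, one_mul, coeff_sum] at hcoeff
  refine mem_support_iff.1 hm (hcoeff.trans (sum_eq_zero fun m' _ => ?_))
  -- the exponent of `X j` on the right is at most `N + w < N + m j`
  rw [coeff_monomial, if_neg]
  intro hEq
  have := DFunLike.congr_fun hEq j
  simp only [Finsupp.coe_equivFunOnFinite_symm, Finsupp.add_apply] at this
  omega

theorem eval_eq_sum_prod_sub_pow (hf : IsBinaryInvariant n w f) (a : Fin n → ℂ) (s : ℂ) :
    eval a f = ∑ m ∈ f.support, coeff m f * ∏ i, (s - a i) ^ (w - m i) := by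
  let q : Polynomial ℂ := ∑ m ∈ f.support, Polynomial.C (coeff m f) *
    ∏ i, (Polynomial.X - Polynomial.C (a i)) ^ (w - m i)
  have hq : ∀ s, q.eval s = ∑ m ∈ f.support, coeff m f * ∏ i, (s - a i) ^ (w - m i) := by
    simp [q, Polynomial.eval_finsetSum, Polynomial.eval_prod]
  -- both sides are polynomials in `s` agreeing at all real `s` different from every `a i`
  have hCq : Polynomial.C (eval a f) = q := by
    have hreal := Set.infinite_range_of_injective Complex.ofReal_injective
    refine Polynomial.eq_of_infinite_eval_eq _ _ <| (hreal.sdiff (Set.finite_range a)).mono ?_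
    rintro _ ⟨⟨s, rfl⟩, hs⟩
    have hs : ∀ i, a i ≠ s := fun i h => hs ⟨i, h⟩
    rw [Set.mem_ofPred_eq, Polynomial.eval_C, hq, hf.eval_eq_eval_inv_sub_mul s hs, eval_eq',
      sum_mul]
    refine sum_congr rfl fun m hm => ?_
    have hpow : ∀ i,
        ((s : ℂ) - a i) ^ (w - m i) = ((s : ℂ) - a i) ^ w * (((s : ℂ) - a i) ^ m i)⁻¹ := fun i =>
      pow_sub₀ _ (sub_ne_zero.2 (hs i).symm) (hf.le_of_mem_support hm i)
    simp only [hpow, inv_pow, prod_mul_distrib]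
    ring
  rw [← hq, ← hCq, Polynomial.eval_C]

end

section LastVariable

variable {r w : ℕ} {f : MvPolynomial (Fin (r + 1)) ℂ}

theorem eval_eq_sum_filter_last (hf : IsBinaryInvariant (r + 1) w f) (a : Fin (r + 1) → ℂ) :
    eval a f = ∑ m ∈ f.support with m (Fin.last r) = w,
      coeff m f * ∏ i : Fin r, (a (Fin.last r) - a i.castSucc) ^ (w - m i.castSucc) := by
  rw [hf.eval_eq_sum_prod_sub_pow a (a (Fin.last r)), sum_filter]
  refine sum_congr rfl fun m hm => ?_
  have hle := hf.le_of_mem_support hm (Fin.last r)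
  rw [Fin.prod_univ_castSucc, sub_self, zero_pow_eq]
  split_ifs <;> first | omega | simp

theorem eq_zero_of_forall_mem_support_ne (hf : IsBinaryInvariant (r + 1) w f)
    (h : ∀ m ∈ f.support, m (Fin.last r) ≠ w) : f = 0 :=
  MvPolynomial.funext fun a => by
    rw [hf.eval_eq_sum_filter_last, filter_false_of_mem h, sum_empty, map_zero]

/-- `star` uses the actual degree of `f` in the last variable, which is `w` unless `f = 0`. -/
theorem filter_last_eq_degreeOf (hf : IsBinaryInvariant (r + 1) w f) :
    {m ∈ f.support | m (Fin.last r) = w} =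
      {m ∈ f.support | m (Fin.last r) = f.degreeOf (Fin.last r)} := by
  by_cases hdeg : f.degreeOf (Fin.last r) = w
  · rw [hdeg]
  have hne : ∀ m ∈ f.support, m (Fin.last r) ≠ w := fun m hm hmw =>
    hdeg (le_antisymm (degreeOf_le_iff.2 fun m' hm' => hf.le_of_mem_support hm' _)
      (hmw ▸ monomial_le_degreeOf _ hm))
  simp [hf.eq_zero_of_forall_mem_support_ne hne]

theorem eval_eq_prod_mul_eval_star (hf : IsBinaryInvariant (r + 1) w f) (a : Fin (r + 1) → ℂ)
    (ha : ∀ i : Fin r, a (Fin.last r) ≠ a i.castSucc) :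
    eval a f = (∏ i : Fin r, (a (Fin.last r) - a i.castSucc) ^ w) *
      eval (fun i : Fin r => 1 / (a (Fin.last r) - a i.castSucc)) (star f) := by
  rw [hf.eval_eq_sum_filter_last, eval_star, ← hf.filter_last_eq_degreeOf, mul_sum]
  refine sum_congr rfl fun m hm => ?_
  have hpow : ∀ i : Fin r, (a (Fin.last r) - a i.castSucc) ^ (w - m i.castSucc) =
      (a (Fin.last r) - a i.castSucc) ^ w * (1 / (a (Fin.last r) - a i.castSucc)) ^ m i.castSucc :=
    fun i => by
      rw [one_div, inv_pow, pow_sub₀ _ (sub_ne_zero.2 (ha i))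
        (hf.le_of_mem_support (mem_filter.1 hm).1 _)]
  simp only [hpow, prod_mul_distrib]
  ring

theorem eq_of_star_eq {g : MvPolynomial (Fin (r + 1)) ℂ} (hf : IsBinaryInvariant (r + 1) w f)
    (hg : IsBinaryInvariant (r + 1) w g) (h : star f = star g) : f = g := by
  refine eq_of_eval_eq_of_eval_ne_zero (∏ i : Fin r, (X (Fin.last r) - X i.castSucc))
    (prod_ne_zero_iff.2 fun i _ => sub_ne_zero.2 (X_injective.ne (Fin.castSucc_lt_last i).ne'))
    fun a ha => ?_
  rw [map_prod] at ha
  have ha : ∀ i : Fin r, a (Fin.last r) ≠ a i.castSucc := fun i =>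
    sub_ne_zero.1 (by simpa using prod_ne_zero_iff.1 ha i (mem_univ i))
  rw [hf.eval_eq_prod_mul_eval_star a ha, hg.eval_eq_prod_mul_eval_star a ha, h]

end LastVariable

end IsBinaryInvariant

/-- The star map is injective on `S_w(r)`; explicitly, for `f ∈ S_w(r)` one has
`f(a₁,…,a_r) = (∏_{i<r} (a_r - aᵢ)^w) · f*(1/(a_r - a₁), …, 1/(a_r - a_{r-1}))`. -/
theorem stmt4 (r w : ℕ) :
    (∀ f g : MvPolynomial (Fin (r + 1)) ℂ, IsBinaryInvariant (r + 1) w f →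
      IsBinaryInvariant (r + 1) w g → star f = star g → f = g) ∧
    (∀ f : MvPolynomial (Fin (r + 1)) ℂ, IsBinaryInvariant (r + 1) w f →
      ∀ a : Fin (r + 1) → ℂ, (∀ i : Fin r, a (Fin.last r) ≠ a i.castSucc) →
        eval a f =
          (∏ i : Fin r, (a (Fin.last r) - a i.castSucc) ^ w) *
            eval (fun i : Fin r => 1 / (a (Fin.last r) - a i.castSucc)) (star f)) :=
  ⟨fun _ _ hf hg h => hf.eq_of_star_eq hg h, fun _ hf a ha => hf.eval_eq_prod_mul_eval_star a ha⟩
end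

section
/- Let f ∈ S_w(r) be a binary invariant of weight w in r variables and let f* be the coefficient of a_r^w in f. Then f* is invariant under simultaneous translation of a_1,...,a_{r-1}: f*(a_1+λ,...,a_{r-1}+λ) = f*(a_1,...,a_{r-1}) for all λ ∈ C; hence f* lies in C[a_i − a_j : 1 ≤ i < j ≤ r−1]. -/
/-!
Taking `A = D = 1`, `C = 0` in the transformation law shows that `f` is invariant under real
simultaneous translations, hence, the shift entering polynomially, under complex ones.
With `d` the degree of `f` in the last variable, `f*(b)` is the coefficient of `tᵈ` in
`f(b, t)`. Translating `b` by `λ` replaces `f(b, t)` by `f(b, t - λ)`, which has the same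
coefficient of `tᵈ` since its degree is at most `d`. Finally a translation invariant polynomial
satisfies `p(a) = p(aᵢ - aᵢ₀)`, so it is a polynomial in the differences.
-/

open MvPolynomial

theorem Polynomial.coeff_taylor_of_natDegree_le {R : Type*} [Semiring R] {p : Polynomial R}
    {d : ℕ} (r : R) (h : p.natDegree ≤ d) : (Polynomial.taylor r p).coeff d = p.coeff d := by
  rcases h.lt_or_eq with h | rfl
  · rw [Polynomial.coeff_eq_zero_of_natDegree_lt h,
      Polynomial.coeff_eq_zero_of_natDegree_lt (by rwa [Polynomial.natDegree_taylor])]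
  · conv_lhs => rw [← Polynomial.natDegree_taylor p r]
    exact Polynomial.leadingCoeff_taylor r p

namespace MvPolynomial

def IsTranslationInvariant {σ R : Type*} [CommSemiring R] (f : MvPolynomial σ R) : Prop :=
  ∀ (a : σ → R) (lam : R), eval (fun i => a i + lam) f = eval a f

theorem isTranslationInvariant_of_forall_ofReal {σ : Type*} {f : MvPolynomial σ ℂ}
    (h : ∀ (a : σ → ℂ) (t : ℝ), eval (fun i => a i + t) f = eval a f) :
    f.IsTranslationInvariant := by
  intro a lam
  let q : Polynomial ℂ := aeval (fun i => Polynomial.C (a i) + Polynomial.X) f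
  have eval_q (t : ℂ) : q.eval t = eval (fun i => a i + t) f := by
    simp only [q, aeval_def]
    rw [← Polynomial.coe_evalRingHom, eval₂_comp_left]
    simp only [Polynomial.coe_evalRingHom, Function.comp_def, Polynomial.eval_add,
      Polynomial.eval_C, Polynomial.eval_X]
    exact congrArg (eval₂ · _ f) (RingHom.ext fun c => Polynomial.eval_C)
  have hq : q = Polynomial.C (eval a f) :=
    Polynomial.eq_of_infinite_eval_eq _ _ <|
      (Set.infinite_range_of_injective Complex.ofReal_injective).mono <| by
        rintro _ ⟨t, rfl⟩
        simp [eval_q, h a]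
  rw [← eval_q, hq, Polynomial.eval_C]

section EvalInit

variable {R : Type*} [CommSemiring R] {r : ℕ}

/-- `f(b, X)`: the restriction of `f` to the line `{b} × R`, as a polynomial in the last
variable. -/
noncomputable def evalInit (b : Fin r → R) : MvPolynomial (Fin (r + 1)) R →+* Polynomial R :=
  eval₂Hom Polynomial.C (Fin.lastCases Polynomial.X fun j => Polynomial.C (b j))

theorem eval_evalInit (b : Fin r → R) (y : R) (f : MvPolynomial (Fin (r + 1)) R) :
    (evalInit b f).eval y = eval (Fin.lastCases y b) f := by
  rw [← Polynomial.coe_evalRingHom, evalInit, coe_eval₂Hom, eval₂_comp_left, eval]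
  congr 1
  · exact RingHom.ext fun c => Polynomial.eval_C
  · funext i
    induction i using Fin.lastCases <;> simp

theorem coeff_evalInit (b : Fin r → R) (f : MvPolynomial (Fin (r + 1)) R) (k : ℕ) :
    (evalInit b f).coeff k =
      ∑ m ∈ f.support.filter (fun m => m (Fin.last r) = k),
        coeff m f * ∏ j, b j ^ m (Fin.castSucc j) := by
  conv_lhs => rw [f.as_sum, map_sum, Polynomial.finsetSum_coeff]
  rw [Finset.sum_filter]
  refine Finset.sum_congr rfl fun m _ => ?_
  have : evalInit b (monomial m (coeff m f)) =
      Polynomial.C (coeff m f * ∏ j, b j ^ m (Fin.castSucc j)) *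
        Polynomial.X ^ m (Fin.last r) := by
    rw [evalInit, eval₂Hom_monomial, Finsupp.prod_fintype _ _ fun i => pow_zero _,
      Fin.prod_univ_castSucc]
    simp [map_mul, map_prod, map_pow, mul_assoc]
  rw [this, Polynomial.coeff_C_mul, Polynomial.coeff_X_pow]
  by_cases h : m (Fin.last r) = k
  · simp [h]
  · rw [if_neg (Ne.symm h), if_neg h, mul_zero]

theorem natDegree_evalInit_le (b : Fin r → R) (f : MvPolynomial (Fin (r + 1)) R) :
    (evalInit b f).natDegree ≤ f.degreeOf (Fin.last r) := by
  refine Polynomial.natDegree_le_iff_coeff_eq_zero.2 fun k hk => ?_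
  refine (coeff_evalInit b f k).trans (Finset.sum_eq_zero fun m hm => absurd ?_ hk.not_ge)
  rw [Finset.mem_filter] at hm
  exact hm.2 ▸ monomial_le_degreeOf _ hm.1

end EvalInit

theorem evalInit_add_const {R : Type*} [CommRing R] [IsDomain R] [Infinite R] {r : ℕ}
    {f : MvPolynomial (Fin (r + 1)) R} (hf : f.IsTranslationInvariant) (b : Fin r → R) (lam : R) :
    evalInit (fun j => b j + lam) f = Polynomial.taylor (-lam) (evalInit b f) := by
  refine Polynomial.funext fun y => ?_
  rw [Polynomial.taylor_eval, eval_evalInit, eval_evalInit,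
    ← hf (Fin.lastCases (y + -lam) b) lam]
  congr 2
  funext i
  induction i using Fin.lastCases <;> simp

theorem mem_adjoin_sub_of_isTranslationInvariant {ι R : Type*} [LinearOrder ι] [CommRing R]
    [IsDomain R] [Infinite R] {p : MvPolynomial ι R} (hp : p.IsTranslationInvariant) :
    p ∈ Algebra.adjoin R {q | ∃ i j : ι, i < j ∧ q = X i - X j} := by
  set S : Set (MvPolynomial ι R) := {q | ∃ i j : ι, i < j ∧ q = X i - X j}
  rcases isEmpty_or_nonempty ι with hι | ⟨⟨i₀⟩⟩
  · obtain ⟨c, rfl⟩ := C_surjective ι p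
    exact Subalgebra.algebraMap_mem _ c
  let g : ι → MvPolynomial ι R := fun i => X i - X i₀
  have hp_eq : p = aeval g p := funext fun b => by
    rw [aeval_eq_bind₁, eval, eval₂Hom_bind₁]
    simpa [g, sub_eq_add_neg] using (hp b (-b i₀)).symm
  have hg : Set.range g ⊆ Algebra.adjoin R S := by
    rintro _ ⟨i, rfl⟩
    rcases lt_trichotomy i i₀ with h | rfl | h
    · exact Algebra.subset_adjoin ⟨i, i₀, h, rfl⟩
    · simp [g]
    · rw [show g i = -(X i₀ - X i) from (neg_sub _ _).symm]
      exact neg_mem (Algebra.subset_adjoin ⟨i₀, i, h, rfl⟩)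
  rw [hp_eq]
  refine Algebra.adjoin_le hg ?_
  rw [← aeval_range]
  exact AlgHom.mem_range_self _ _

end MvPolynomial

theorem IsBinaryInvariant.isTranslationInvariant {n w : ℕ} {f : MvPolynomial (Fin n) ℂ}
    (hf : IsBinaryInvariant n w f) : f.IsTranslationInvariant :=
  isTranslationInvariant_of_forall_ofReal fun a t => by
    simpa using (hf 1 t 0 1 (by ring) a (by simp)).symm

theorem eval_star_eq_coeff_evalInit {r : ℕ} (b : Fin r → ℂ)
    (f : MvPolynomial (Fin (r + 1)) ℂ) :
    eval b (star f) = (evalInit b f).coeff (f.degreeOf (Fin.last r)) := by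
  unfold _root_.star
  rw [coeff_evalInit, map_sum]
  refine Finset.sum_congr rfl fun m _ => ?_
  rw [eval_monomial, Finsupp.prod_fintype _ _ fun i => pow_zero _]
  simp [Finsupp.comapDomain_apply]

theorem isTranslationInvariant_star {r : ℕ} {f : MvPolynomial (Fin (r + 1)) ℂ}
    (hf : f.IsTranslationInvariant) : (star f).IsTranslationInvariant := fun b lam => by
  rw [eval_star_eq_coeff_evalInit, eval_star_eq_coeff_evalInit, evalInit_add_const hf,
    Polynomial.coeff_taylor_of_natDegree_le _ (natDegree_evalInit_le b f)]

/-- For `f ∈ S_w(r)`, the star `f*` is invariant under simultaneous translation of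
its variables, hence lies in `ℂ[aᵢ - aⱼ : 1 ≤ i < j ≤ r-1]`. -/
theorem stmt5 (r w : ℕ) (f : MvPolynomial (Fin (r + 1)) ℂ)
    (hinv : IsBinaryInvariant (r + 1) w f) :
    (∀ (b : Fin r → ℂ) (lam : ℂ), eval (fun i => b i + lam) (star f) = eval b (star f)) ∧
    star f ∈ Algebra.adjoin ℂ
      {p : MvPolynomial (Fin r) ℂ | ∃ i j : Fin r, i < j ∧ p = X i - X j} :=
  have hstar := isTranslationInvariant_star hinv.isTranslationInvariant
  ⟨hstar, mem_adjoin_sub_of_isTranslationInvariant hstar⟩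
end

section
/- Let H_g = (1/2^g)·(1/(g+1))·Δ_{B_g}² · Σ_{e ∈ E_{2g+2}} (−1/ψ_e), a polynomial in a_1,...,a_{2g+2} (since each ψ_e divides Δ_{B_g}²). Then the full symmetrization of H_g vanishes: Σ_{σ ∈ S_{2g+2}} σ(H_g) = 0, where σ(f)(a_1,...,a_{2g+2}) = f(a_{σ(1)},...,a_{σ(2g+2)}). -/
open MvPolynomial

/-- `Δ_{B_g} = ∏_{i>j} (aᵢ - aⱼ)`, the full Vandermonde product. -/
noncomputable def DeltaFull (r : ℕ) : MvPolynomial (Fin r) ℂ :=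
  ∏ p ∈ (Finset.univ ×ˢ Finset.univ).filter (fun p : Fin r × Fin r => p.2 < p.1),
    (X p.1 - X p.2)

/-- `ψ_e = (a_{e_{2g+2}} - a_{e₁}) · ∏_{i=1}^{2g+1} (a_{eᵢ} - a_{eᵢ₊₁})`. -/
noncomputable def psi (g : ℕ) (e : Equiv.Perm (Fin (2 * g + 2))) :
    MvPolynomial (Fin (2 * g + 2)) ℂ :=
  (X (e ⟨2 * g + 1, by omega⟩) - X (e ⟨0, by omega⟩)) *
    ∏ i : Fin (2 * g + 1), (X (e ⟨i.val, by omega⟩) - X (e ⟨i.val + 1, by omega⟩))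

/-- `E_{2g+2}`: permutations of the indices alternating odd/even starting with odd. -/
noncomputable def Eset (g : ℕ) : Finset (Equiv.Perm (Fin (2 * g + 2))) :=
  Finset.univ.filter (fun e => ∀ i, (e i).val % 2 = i.val % 2)


/-!
For a permutation `τ`, read as a cyclic order of the variables, let
`ψ_τ = ∏ᵢ (a_{τ i} - a_{τ (i+1)})`; the `ψ_e` of the statement are the `ψ_τ` with `τ ∈ E`.
Multiplying the defining equation of `H` by the remaining `ψ_τ`, applying `σ` (which fixes `Δ²`
and permutes the `ψ_τ`) and summing over `σ` gives
`(∑_σ σ H) · ∏_τ ψ_τ = -Δ² · #E · ∑_τ ∏_{τ' ≠ τ} ψ_{τ'}`.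
The last sum is `∏_τ ψ_τ · ∑_τ 1/ψ_τ`, and `∑_τ 1/ψ_τ = 0` for at least three variables:
with `a = a_{τ(-1)}`, `b = a_{τ 0}`, `c = a_{τ 1}`, the partial fraction
`1/((b - c)(a - b)) = 1/(a - c) · (1/(a - b) + 1/(b - c))` splits `1/ψ_τ` into two terms over the
cycle with position `0` removed, and rotating the other positions turns the first sum into minus
the second.
-/

open Finset Equiv Function

variable {n : ℕ}

section CycleDiffProd

variable {R : Type*} [CommRing R] [NeZero n]

def cycleDiffProd (x : Fin n → R) (e : Perm (Fin n)) : R :=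
  ∏ i, (x (e i) - x (e (i + 1)))

lemma map_cycleDiffProd {S F : Type*} [CommRing S] [FunLike F R S] [RingHomClass F R S] (f : F)
    (x : Fin n → R) (e : Perm (Fin n)) : f (cycleDiffProd x e) = cycleDiffProd (f ∘ x) e := by
  simp only [cycleDiffProd, map_prod, map_sub, comp_apply]

lemma cycleDiffProd_comp (x : Fin n → R) (σ e : Perm (Fin n)) :
    cycleDiffProd (x ∘ σ) e = cycleDiffProd x (σ * e) := rfl

lemma sub_succ_ne_zero_of_injective [IsDomain R] (hn : 2 ≤ n) {x : Fin n → R}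
    (hx : Injective x) (e : Perm (Fin n)) (i : Fin n) : x (e i) - x (e (i + 1)) ≠ 0 := by
  rw [ne_eq, sub_eq_zero, hx.eq_iff, e.injective.eq_iff, left_eq_add, Fin.one_eq_zero_iff]
  omega

lemma cycleDiffProd_ne_zero [IsDomain R] (hn : 2 ≤ n) {x : Fin n → R} (hx : Injective x)
    (e : Perm (Fin n)) : cycleDiffProd x e ≠ 0 :=
  prod_ne_zero_iff.mpr fun i _ => sub_succ_ne_zero_of_injective hn hx e i

end CycleDiffProd

section SkipZero

variable [NeZero n]

/-- The cyclic successor on the positions `1, …, n - 1`, fixing `0`. -/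
def succSkipZero (n : ℕ) [NeZero n] : Perm (Fin n) := swap 0 1 * Equiv.addRight 1

lemma succSkipZero_zero : succSkipZero n 0 = 0 := by
  simp [succSkipZero]

lemma succSkipZero_neg_one : succSkipZero n (-1) = 1 := by
  simp [succSkipZero]

lemma succSkipZero_of_ne {i : Fin n} (h0 : i ≠ 0) (h1 : i ≠ -1) : succSkipZero n i = i + 1 := by
  simp only [succSkipZero, Perm.mul_apply, Equiv.coe_addRight]
  refine swap_apply_of_ne_of_ne ?_ ?_
  · rwa [ne_eq, ← eq_neg_iff_add_eq_zero]
  · simpa using h0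

variable {R : Type*} [CommRing R]

/-- `cycleDiffProd x e` for the cycle `e` with position `0` deleted. -/
def cycleDiffProdSkipZero (x : Fin n → R) (e : Perm (Fin n)) : R :=
  ∏ i ∈ univ.erase 0, (x (e i) - x (e (succSkipZero n i)))

lemma cycleDiffProdSkipZero_mul_succSkipZero (x : Fin n → R) (e : Perm (Fin n)) :
    cycleDiffProdSkipZero x (e * succSkipZero n) = cycleDiffProdSkipZero x e := by
  refine prod_equiv (s := univ.erase 0) (t := univ.erase 0) (succSkipZero n) (fun i => ?_)
    (fun i _ => rfl)
  simp only [mem_erase, mem_univ, and_true, (succSkipZero n).injective.ne_iff' succSkipZero_zero]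

end SkipZero

section PartialFractions

variable {K : Type*} [Field K] [NeZero n] {x : Fin n → K}

lemma inv_cycleDiffProd_eq (hn : 3 ≤ n) (hx : Injective x) (e : Perm (Fin n)) :
    (cycleDiffProd x e)⁻¹ = (cycleDiffProdSkipZero x e)⁻¹ *
      ((x (e (-1)) - x (e 0))⁻¹ + (x (e 0) - x (e 1))⁻¹) := by
  have h10 : (1 : Fin n) ≠ 0 := by
    rw [ne_eq, Fin.one_eq_zero_iff]
    omega
  have hm10 : (-1 : Fin n) ≠ 0 := neg_ne_zero.mpr h10
  have hm11 : (-1 : Fin n) ≠ 1 := by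
    rw [ne_eq, neg_eq_iff_add_eq_zero, Fin.ext_iff, Fin.val_add, Fin.val_one', Fin.val_zero,
      Nat.one_mod_eq_one.mpr (by omega), Nat.mod_eq_of_lt (by omega)]
    omega
  have hm1 : (-1 : Fin n) ∈ univ.erase 0 := mem_erase.mpr ⟨hm10, mem_univ _⟩
  set r := ∏ i ∈ (univ.erase 0).erase (-1), (x (e i) - x (e (i + 1)))
  have hcyc : cycleDiffProd x e = (x (e 0) - x (e 1)) * ((x (e (-1)) - x (e 0)) * r) := by
    rw [cycleDiffProd, ← mul_prod_erase _ _ (mem_univ 0), ← mul_prod_erase _ _ hm1, zero_add,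
      neg_add_cancel]
  have hskip : cycleDiffProdSkipZero x e = (x (e (-1)) - x (e 1)) * r := by
    rw [cycleDiffProdSkipZero, ← mul_prod_erase _ _ hm1, succSkipZero_neg_one]
    congr 1
    refine prod_congr rfl fun i hi => ?_
    rw [mem_erase, mem_erase] at hi
    rw [succSkipZero_of_ne hi.2.1 hi.1]
  have hr : r ≠ 0 :=
    prod_ne_zero_iff.mpr fun i _ => sub_succ_ne_zero_of_injective (by omega) hx e i
  have hne {i j : Fin n} (h : i ≠ j) : x (e i) - x (e j) ≠ 0 := by
    rwa [sub_ne_zero, hx.ne_iff, e.injective.ne_iff]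
  have hab := hne hm10
  have hac := hne hm11
  have hbc := hne h10.symm
  rw [hcyc, hskip]
  field_simp
  ring

theorem sum_inv_cycleDiffProd_eq_zero (hn : 3 ≤ n) (hx : Injective x) :
    ∑ e : Perm (Fin n), (cycleDiffProd x e)⁻¹ = 0 := by
  simp_rw [inv_cycleDiffProd_eq hn hx, mul_add, sum_add_distrib, add_eq_zero_iff_eq_neg,
    ← sum_neg_distrib]
  rw [← Equiv.sum_comp (Equiv.mulRight (succSkipZero n))]
  refine sum_congr rfl fun e _ => ?_
  rw [coe_mulRight, cycleDiffProdSkipZero_mul_succSkipZero, Perm.mul_apply, Perm.mul_apply,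
    succSkipZero_neg_one, succSkipZero_zero, ← neg_sub, inv_neg, mul_neg]

end PartialFractions

namespace MvPolynomial

section OffDiagProd

variable (ι R : Type*) [Fintype ι] [CommRing R]

noncomputable def offDiagProd : MvPolynomial ι R :=
  ∏ p ∈ univ.offDiag, (X p.1 - X p.2)

variable {ι R}

lemma offDiagProd_ne_zero [IsDomain R] : offDiagProd ι R ≠ 0 :=
  prod_ne_zero_iff.mpr fun _ hp => sub_ne_zero.mpr fun h => (mem_offDiag.mp hp).2.2 (X_injective h)

lemma eval_offDiagProd_of_not_injective {x : ι → R} (hx : ¬ Injective x) :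
    eval x (offDiagProd ι R) = 0 := by
  obtain ⟨i, j, hij, hne⟩ : ∃ i j, x i = x j ∧ i ≠ j := by
    simpa [Injective] using hx
  rw [offDiagProd, eval_prod]
  exact prod_eq_zero (i := (i, j)) (by simpa using hne) (by simp [hij])

lemma rename_offDiagProd (σ : Perm ι) : rename σ (offDiagProd ι R) = offDiagProd ι R := by
  rw [offDiagProd, map_prod]
  refine prod_equiv (σ.prodCongr σ) (fun p => ?_) (fun p _ => ?_)
  · simp [σ.injective.ne_iff]
  · simp

theorem eq_zero_of_eval_eq_zero_of_injective [IsDomain R] [Infinite R] {p : MvPolynomial ι R}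
    (h : ∀ x : ι → R, Injective x → eval x p = 0) : p = 0 := by
  have : p * offDiagProd ι R = 0 := funext fun x => by
    by_cases hx : Injective x
    · simp [h x hx]
    · simp [eval_offDiagProd_of_not_injective hx]
  exact (mul_eq_zero.mp this).resolve_right offDiagProd_ne_zero

end OffDiagProd

end MvPolynomial

lemma prod_univ_erase_mul_left {G M : Type*} [Group G] [Fintype G] [DecidableEq G]
    [CommMonoid M] (f : G → M) (σ a : G) :
    ∏ τ ∈ univ.erase a, f (σ * τ) = ∏ τ ∈ univ.erase (σ * a), f τ :=
  prod_equiv (Equiv.mulLeft σ) (by simp) (fun _ _ => rfl)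

lemma sum_prod_erase_mul_prod_sdiff {ι M : Type*} [DecidableEq ι] [CommSemiring M]
    {s t : Finset ι} (h : s ⊆ t) (f : ι → M) :
    (∑ a ∈ s, ∏ b ∈ s.erase a, f b) * ∏ b ∈ t \ s, f b = ∑ a ∈ s, ∏ b ∈ t.erase a, f b := by
  rw [sum_mul]
  refine sum_congr rfl fun a ha => ?_
  have hsdiff : t.erase a \ s.erase a = t \ s := by
    ext b
    by_cases hb : b = a <;> simp [hb, ha]
  rw [← prod_sdiff (erase_subset_erase a h), hsdiff, mul_comm]

section CycleDiffProdX

variable {R : Type*} [CommRing R] [NeZero n]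

lemma rename_cycleDiffProd_X (σ e : Perm (Fin n)) :
    rename σ (cycleDiffProd (X : Fin n → MvPolynomial (Fin n) R) e) = cycleDiffProd X (σ * e) := by
  rw [map_cycleDiffProd, ← cycleDiffProd_comp]
  congr 1
  exact funext fun i => rename_X σ i

lemma rename_prod_cycleDiffProd_X (σ : Perm (Fin n)) :
    rename σ (∏ τ, cycleDiffProd (X : Fin n → MvPolynomial (Fin n) R) τ) =
      ∏ τ, cycleDiffProd X τ := by
  simp only [map_prod, rename_cycleDiffProd_X]
  exact Equiv.prod_comp (Equiv.mulLeft σ) (cycleDiffProd X)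

lemma rename_prod_erase_cycleDiffProd_X (σ a : Perm (Fin n)) :
    rename σ (∏ τ ∈ univ.erase a, cycleDiffProd (X : Fin n → MvPolynomial (Fin n) R) τ) =
      ∏ τ ∈ univ.erase (σ * a), cycleDiffProd X τ := by
  simp only [map_prod, rename_cycleDiffProd_X, prod_univ_erase_mul_left (cycleDiffProd X)]

theorem sum_prod_erase_cycleDiffProd_X_eq_zero {K : Type*} [Field K] [Infinite K] (hn : 3 ≤ n) :
    ∑ τ : Perm (Fin n),
      ∏ τ' ∈ univ.erase τ, cycleDiffProd (X : Fin n → MvPolynomial (Fin n) K) τ' = 0 := by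
  refine eq_zero_of_eval_eq_zero_of_injective fun x hx => ?_
  have hprod (τ : Perm (Fin n)) : ∏ τ' ∈ univ.erase τ, cycleDiffProd x τ' =
      (∏ τ', cycleDiffProd x τ') * (cycleDiffProd x τ)⁻¹ := by
    rw [eq_mul_inv_iff_mul_eq₀ (cycleDiffProd_ne_zero (by omega) hx τ),
      prod_erase_mul _ _ (mem_univ τ)]
  simp only [map_sum, map_prod, map_cycleDiffProd, Function.comp_def, eval_X]
  rw [sum_congr rfl fun τ _ => hprod τ, ← mul_sum, sum_inv_cycleDiffProd_eq_zero hn hx, mul_zero]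

theorem sum_sum_prod_erase_mul_cycleDiffProd_X_eq_zero {K : Type*} [Field K] [Infinite K]
    (hn : 3 ≤ n) (E : Finset (Perm (Fin n))) :
    ∑ σ : Perm (Fin n), ∑ e ∈ E,
      ∏ τ ∈ univ.erase (σ * e), cycleDiffProd (X : Fin n → MvPolynomial (Fin n) K) τ = 0 := by
  rw [sum_comm]
  refine sum_eq_zero fun e _ => ?_
  exact (Equiv.sum_comp (Equiv.mulRight e) fun a => ∏ τ ∈ univ.erase a, cycleDiffProd X τ).trans
    (sum_prod_erase_cycleDiffProd_X_eq_zero hn)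

end CycleDiffProdX

lemma psi_eq_cycleDiffProd (g : ℕ) (e : Perm (Fin (2 * g + 2))) :
    psi g e = cycleDiffProd X e := by
  rw [cycleDiffProd, Fin.prod_univ_castSucc, psi, mul_comm (X _ - X _)]
  congr 1
  · refine prod_congr rfl fun i _ => ?_
    congr 3
    ext
    simp
  · congr 3
    ext
    simp

lemma DeltaFull_sq (r : ℕ) : DeltaFull r ^ 2 =
    (-1) ^ #((univ ×ˢ univ).filter fun p : Fin r × Fin r => p.2 < p.1) *
      offDiagProd (Fin r) ℂ := by
  set L := (univ ×ˢ univ).filter fun p : Fin r × Fin r => p.2 < p.1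
  have hlower : univ.offDiag.filter (fun p : Fin r × Fin r => p.2 < p.1) = L := by
    ext p
    simpa [L] using fun h => h.ne'
  have hupper : ∏ p ∈ univ.offDiag.filter (fun p : Fin r × Fin r => ¬ p.2 < p.1),
      (X p.1 - X p.2 : MvPolynomial (Fin r) ℂ) = ∏ p ∈ L, (X p.2 - X p.1) :=
    prod_equiv (Equiv.prodComm _ _) (fun p => by
      simp only [L, mem_filter, mem_offDiag, mem_univ, univ_product_univ, prodComm_apply,
        Prod.fst_swap, Prod.snd_swap, not_lt, true_and]
      grind) (fun _ _ => rfl)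
  rw [offDiagProd, ← prod_filter_mul_prod_filter_not _ (fun p : Fin r × Fin r => p.2 < p.1),
    hlower, hupper, DeltaFull, sq, ← prod_const, ← prod_mul_distrib, ← prod_mul_distrib,
    ← prod_mul_distrib]
  exact prod_congr rfl fun _ _ => by ring

lemma rename_DeltaFull_sq (r : ℕ) (σ : Perm (Fin r)) :
    rename σ (DeltaFull r ^ 2) = DeltaFull r ^ 2 := by
  rw [DeltaFull_sq, map_mul, rename_offDiagProd, map_pow, map_neg, map_one]

/-- The full symmetrization of `H_g = (1/2^g)(1/(g+1)) Δ_{B_g}² Σ_{e∈E}(−1/ψ_e)` vanishes.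
(The defining equation of `H_g` is stated multiplied through by `2^g (g+1) ∏_e ψ_e`,
which determines `H_g` uniquely.) -/
theorem stmt14 (g : ℕ) (hg : 1 ≤ g) (H : MvPolynomial (Fin (2 * g + 2)) ℂ)
    (hH : C ((2 ^ g * (g + 1) : ℕ) : ℂ) * (H * ∏ e ∈ Eset g, psi g e)
      = -(DeltaFull (2 * g + 2)) ^ 2 * ∑ e ∈ Eset g, ∏ e' ∈ (Eset g).erase e, psi g e') :
    ∑ σ : Equiv.Perm (Fin (2 * g + 2)),
      rename (σ : Fin (2 * g + 2) → Fin (2 * g + 2)) H = 0 := by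
  simp_rw [psi_eq_cycleDiffProd] at hH
  have hcleared : C ((2 ^ g * (g + 1) : ℕ) : ℂ) * (H * ∏ τ, cycleDiffProd X τ) =
      -DeltaFull (2 * g + 2) ^ 2 * ∑ e ∈ Eset g, ∏ τ ∈ univ.erase e, cycleDiffProd X τ := by
    rw [← prod_sdiff (subset_univ (Eset g)), ← sum_prod_erase_mul_prod_sdiff (subset_univ _)]
    linear_combination (∏ τ ∈ univ \ Eset g, cycleDiffProd X τ) * hH
  have hrenamed (σ : Perm (Fin (2 * g + 2))) :
      C ((2 ^ g * (g + 1) : ℕ) : ℂ) * (rename σ H * ∏ τ, cycleDiffProd X τ) =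
        -DeltaFull (2 * g + 2) ^ 2 *
          ∑ e ∈ Eset g, ∏ τ ∈ univ.erase (σ * e), cycleDiffProd X τ := by
    simpa only [map_mul, map_neg, map_sum, rename_C, rename_DeltaFull_sq,
      rename_prod_cycleDiffProd_X, rename_prod_erase_cycleDiffProd_X]
      using congrArg (rename σ) hcleared
  have hsum : C ((2 ^ g * (g + 1) : ℕ) : ℂ) *
      ((∑ σ : Perm (Fin (2 * g + 2)), rename σ H) * ∏ τ, cycleDiffProd X τ) = 0 := by
    rw [sum_mul, mul_sum, sum_congr rfl fun σ _ => hrenamed σ, ← mul_sum,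
      sum_sum_prod_erase_mul_cycleDiffProd_X_eq_zero (by omega), mul_zero]
  have hc : (C ((2 ^ g * (g + 1) : ℕ) : ℂ) : MvPolynomial (Fin (2 * g + 2)) ℂ) ≠ 0 :=
    C_ne_zero.mpr (Nat.cast_ne_zero.mpr (by positivity))
  have hP : ∏ τ, cycleDiffProd (X : Fin (2 * g + 2) → MvPolynomial (Fin (2 * g + 2)) ℂ) τ ≠ 0 :=
    prod_ne_zero_iff.mpr fun τ _ => cycleDiffProd_ne_zero (by omega) X_injective τ
  exact (mul_eq_zero.mp ((mul_eq_zero.mp hsum).resolve_left hc)).resolve_right hP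
end

section
/- Let g ≥ 2 and let f ∈ S_{g-1}(2g+2) be a binary invariant of weight g−1 in 2g+2 variables, invariant under the group S_U stabilizing the parity partition of indices. If f(a_1,...,a_{2g-1}, u, u, u) = 0 identically (as a polynomial in a_1,...,a_{2g-1}, u), then f = 0. -/
/-!
Specialising the invariance to `z ↦ -1/z` shows that identifying the variables indexed by a set
`S` gives a polynomial of degree `≤ |S|(g-1)` in the new variable, and `S_U`-invariance turns
the hypothesis into: `f` vanishes as soon as two odd-indexed variables equal one even-indexed
one. Let `O`, `E` be the odd and even indices and, for `∅ ≠ S ⊆ O`, let `f_S(s)` be `f` with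
the variables of `S` set to `s`. If `f_{S ∪ {i}} = 0` for every `i ∈ O \ S`, then `f_S` has a
root of multiplicity `≥ |S| - 1` at each `x_j`, `j ∈ E`, and a root at each `x_i`, `i ∈ O \ S`:
in total `(g+1)(|S|-1) + (g+1-|S|) = g|S| > (g-1)|S|` roots, so `f_S = 0`. Downward induction
on `S` ends at `S = {i}`, where `f_S` is `f` itself.
-/

open MvPolynomial

/-- `σ` lies in the theta group `S_U`. -/
def InSU (n : ℕ) (σ : Equiv.Perm (Fin n)) : Prop :=
  (∀ i, (σ i).val % 2 = i.val % 2) ∨ (∀ i, (σ i).val % 2 ≠ i.val % 2)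

open Finset

theorem Finset.card_sub_one_le_sum {ι : Type*} {S : Finset ι} {f : ι → ℕ}
    (h : ∀ a ∈ S, ∀ b ∈ S, a ≠ b → f a ≠ 0 ∨ f b ≠ 0) : #S - 1 ≤ ∑ i ∈ S, f i := by
  classical
  have hzero : #{i ∈ S | f i = 0} ≤ 1 := card_le_one.mpr fun a ha b hb ↦ by
    simp only [mem_filter] at ha hb
    by_contra hab
    rcases h a ha.1 b hb.1 hab with h' | h' <;> simp_all
  have hpos : #{i ∈ S | f i ≠ 0} ≤ ∑ i ∈ S, f i := calc
    #{i ∈ S | f i ≠ 0} = ∑ i ∈ S with f i ≠ 0, 1 := card_eq_sum_ones _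
    _ ≤ ∑ i ∈ S with f i ≠ 0, f i := sum_le_sum fun i hi ↦ by
      simp only [mem_filter] at hi; omega
    _ ≤ ∑ i ∈ S, f i := sum_le_sum_of_subset (filter_subset _ _)
  have hsplit := card_filter_add_card_filter_not (s := S) (fun i ↦ f i = 0)
  simp only [← ne_eq] at hsplit
  omega

section Polynomial

open Polynomial

theorem Polynomial.sum_le_natDegree_of_pow_dvd {A ι : Type*} [CommRing A] [IsDomain A]
    {q : Polynomial A} (hq : q ≠ 0) {x : ι → A} (hx : Function.Injective x) {T : Finset ι}
    {e : ι → ℕ} (h : ∀ j ∈ T, (X - C (x j)) ^ e j ∣ q) : ∑ j ∈ T, e j ≤ q.natDegree := by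
  let K := FractionRing A
  have hinj : Function.Injective (algebraMap A K) := IsFractionRing.injective A K
  have hdvd : ∏ j ∈ T, (X - C (algebraMap A K (x j))) ^ e j ∣ q.map (algebraMap A K) := by
    refine prod_dvd_of_coprime ?_ fun j hj ↦ ?_
    · exact fun a _ b _ hab ↦ (pairwise_coprime_X_sub_C (hinj.comp hx) hab).pow
    · simpa using Polynomial.map_dvd (algebraMap A K) (h j hj)
  have hqK : q.map (algebraMap A K) ≠ 0 := (Polynomial.map_ne_zero_iff hinj).mpr hq
  have hdeg := natDegree_le_of_dvd hdvd hqK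
  rw [natDegree_prod_of_monic _ _ fun j _ ↦ (monic_X_sub_C _).pow _,
    natDegree_map_eq_of_injective hinj] at hdeg
  simpa only [natDegree_pow, natDegree_X_sub_C, mul_one] using hdeg

theorem Polynomial.natDegree_le_of_eval_eq_pow_mul_eval_inv {K : Type*} [Field K] [Infinite K]
    {p r : K[X]} {N : ℕ} (h : ∀ z ≠ 0, p.eval z = z ^ N * r.eval z⁻¹) : p.natDegree ≤ N := by
  rcases eq_or_ne p 0 with rfl | hp
  · simp
  have hrev : ∀ z : K, z ≠ 0 → z ^ r.natDegree * r.eval z⁻¹ = r.reverse.eval z := by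
    intro z hz
    let := invertibleOfNonzero (inv_ne_zero hz)
    have := eval₂_reverse_mul_pow (RingHom.id K) z⁻¹ r
    rw [invOf_eq_inv, inv_inv, ← eval, ← eval] at this
    rw [← this, inv_pow, mul_comm, mul_assoc, inv_mul_cancel₀ (pow_ne_zero _ hz), mul_one]
  have heq : X ^ r.natDegree * p = X ^ N * r.reverse := by
    refine eq_of_infinite_eval_eq _ _ ((Set.finite_singleton (0 : K)).infinite_compl.mono ?_)
    intro z hz
    simp only [Set.mem_compl_iff, Set.mem_singleton_iff] at hz
    simp only [Set.mem_ofPred_eq, eval_mul, eval_pow, eval_X, h z hz, ← hrev z hz]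
    ring
  have hle : (X ^ N * r.reverse).natDegree ≤ N + r.natDegree :=
    natDegree_mul_le.trans (add_le_add (natDegree_X_pow_le N) (reverse_natDegree_le r))
  rw [← heq, natDegree_X_pow_mul (n := r.natDegree) hp] at hle
  omega

end Polynomial

theorem Equiv.apply_swap_apply_of_apply_eq {α β : Type*} [DecidableEq α] (π : α → β) {x y : α}
    (h : π x = π y) (i : α) : π (swap x y i) = π i := by
  rcases eq_or_ne i x with rfl | hx
  · simp [h]
  rcases eq_or_ne i y with rfl | hy
  · simp [h]
  rw [swap_apply_of_ne_of_ne hx hy]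

theorem Equiv.Perm.exists_fiberwise_apply_eq_triple {α β : Type*} [DecidableEq α] (π : α → β)
    {a b j a' b' j' : α} (hab : a ≠ b) (hab' : a' ≠ b') (ha : π a' = π a) (hb : π b' = π b)
    (hj : π j' = π j) (haj : π a ≠ π j) (hbj : π b ≠ π j) :
    ∃ σ : Perm α, (∀ i, π (σ i) = π i) ∧ σ a' = a ∧ σ b' = b ∧ σ j' = j := by
  set c := swap a' a b
  have hc : π b' = π c := by rw [hb, apply_swap_apply_of_apply_eq π ha]
  set σ₀ := swap a' a * swap b' c
  have hσ₀ : ∀ i, π (σ₀ i) = π i := fun i ↦ by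
    simp only [σ₀, Perm.mul_apply, apply_swap_apply_of_apply_eq π ha,
      apply_swap_apply_of_apply_eq π hc]
  have hca : c ≠ a' := fun h ↦ hab (by simpa [c] using (congrArg (swap a' a) h).symm)
  have hσ₀a : σ₀ a' = a := by simp [σ₀, swap_apply_of_ne_of_ne hab' hca.symm]
  have hσ₀b : σ₀ b' = b := by simp [σ₀, c]
  have hj' : π (σ₀ j') = π j := (hσ₀ j').trans hj
  refine ⟨swap (σ₀ j') j * σ₀, fun i ↦ ?_, ?_, ?_, by simp⟩
  · rw [Perm.mul_apply, apply_swap_apply_of_apply_eq π hj', hσ₀]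
  · rw [Perm.mul_apply, hσ₀a, swap_apply_of_ne_of_ne (fun h ↦ haj (by rw [h, hj']))
      (fun h ↦ haj (by rw [h]))]
  · rw [Perm.mul_apply, hσ₀b, swap_apply_of_ne_of_ne (fun h ↦ hbj (by rw [h, hj']))
      (fun h ↦ hbj (by rw [h]))]

namespace MvPolynomial

section IdentifyVars

variable {σ R : Type*} [CommRing R] [DecidableEq σ]

noncomputable def identifyVars (S : Finset σ) :
    MvPolynomial σ R →ₐ[R] Polynomial (MvPolynomial σ R) :=
  aeval fun i ↦ if i ∈ S then Polynomial.X else Polynomial.C (X i)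

@[simp]
theorem identifyVars_X (S : Finset σ) (i : σ) :
    identifyVars S (X i : MvPolynomial σ R) =
      if i ∈ S then Polynomial.X else Polynomial.C (X i) :=
  aeval_X _ _

@[simp]
theorem identifyVars_C (S : Finset σ) (c : R) :
    identifyVars S (C c : MvPolynomial σ R) = Polynomial.C (C c) :=
  aeval_C _ _

theorem eval_map_identifyVars (S : Finset σ) (p : MvPolynomial σ R) (x : σ → R) (z : R) :
    (Polynomial.map (eval x) (identifyVars S p)).eval z =
      eval (S.piecewise (fun _ ↦ z) x) p := by
  induction p using MvPolynomial.induction_on with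
  | C a => simp
  | add p q hp hq => simp [hp, hq]
  | mul_X p i hp => by_cases hi : i ∈ S <;> simp [hp, hi]

theorem eval_X_identifyVars_insert (S : Finset σ) (i : σ) (p : MvPolynomial σ R) :
    (identifyVars S p).eval (X i) = (identifyVars (insert i S) p).eval (X i) := by
  induction p using MvPolynomial.induction_on with
  | C a => simp
  | add p q hp hq => simp [hp, hq]
  | mul_X p k hp =>
    by_cases hk : k ∈ S
    · simp [hp, hk]
    · obtain rfl | hki := eq_or_ne k i <;> simp [*]

theorem identifyVars_eq_comp {S : Finset σ} {j : σ} (hj : j ∉ S) (p : MvPolynomial σ R) :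
    identifyVars S p =
      (identifyVars S (aeval (fun i ↦ if i ∈ S then X i + X j else X i) p)).comp
        (Polynomial.X - Polynomial.C (X j)) := by
  induction p using MvPolynomial.induction_on with
  | C a => simp
  | add p q hp hq => simp [hp, hq, Polynomial.add_comp]
  | mul_X p k hp =>
    by_cases hk : k ∈ S <;> simp [hp, hk, hj, Polynomial.mul_comp]

theorem X_pow_dvd_identifyVars [Fintype σ] {S : Finset σ} {p : MvPolynomial σ R} {k : ℕ}
    (h : ∀ α ∈ p.support, k ≤ ∑ i ∈ S, α i) : Polynomial.X ^ k ∣ identifyVars S p := by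
  rw [p.as_sum, map_sum]
  refine dvd_sum fun α hα ↦ ?_
  rw [identifyVars, aeval_monomial, Finsupp.prod_pow, ← prod_mul_prod_compl S]
  refine Dvd.dvd.mul_left (Dvd.dvd.mul_right ?_ _) _
  rw [prod_congr rfl fun i hi ↦ by rw [if_pos hi], prod_pow_eq_pow_sum]
  exact pow_dvd_pow _ (h α hα)

end IdentifyVars

theorem natDegree_identifyVars_le_of_eval_eq_eval_neg_inv {σ K : Type*} [Fintype σ]
    [DecidableEq σ] [Field K] [Infinite K] {f : MvPolynomial σ K} {w : ℕ}
    (hf : ∀ a : σ → K, (∀ i, a i ≠ 0) → eval a f = eval (fun i ↦ -(a i)⁻¹) f * ∏ i, a i ^ w)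
    (S : Finset σ) : (identifyVars S f).natDegree ≤ #S * w := by
  refine Polynomial.natDegree_le_iff_coeff_eq_zero.mpr fun k hk ↦ ?_
  refine funext_set (fun _ ↦ {0}ᶜ) (fun _ ↦ (Set.finite_singleton 0).infinite_compl)
    fun y hy ↦ ?_
  simp only [Set.mem_pi, Set.mem_univ, Set.mem_compl_iff, Set.mem_singleton_iff,
    true_implies] at hy
  rw [map_zero, ← Polynomial.coeff_map]
  refine Polynomial.coeff_eq_zero_of_natDegree_lt (lt_of_le_of_lt ?_ hk)
  -- at `z ≠ 0`, the invariance expresses the specialisation at `y` through the one at `-1/y`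
  refine Polynomial.natDegree_le_of_eval_eq_pow_mul_eval_inv
    (r := Polynomial.C (∏ i ∈ Sᶜ, y i ^ w) *
      ((identifyVars S f).map (eval fun i ↦ -(y i)⁻¹)).comp (-Polynomial.X)) fun z hz ↦ ?_
  have hpiece : ∀ i, S.piecewise (fun _ ↦ z) y i ≠ 0 := fun i ↦ by
    by_cases hi : i ∈ S <;> simp [hi, hz, hy]
  rw [eval_map_identifyVars, hf _ hpiece, Polynomial.eval_mul, Polynomial.eval_C,
    Polynomial.eval_comp, eval_map_identifyVars]
  have hneg : (fun i ↦ -(S.piecewise (fun _ ↦ z) y i)⁻¹) =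
      S.piecewise (fun _ ↦ (-Polynomial.X).eval z⁻¹) fun i ↦ -(y i)⁻¹ := by
    ext i; by_cases hi : i ∈ S <;> simp [hi]
  have hprod : ∏ i, S.piecewise (fun _ ↦ z) y i ^ w = z ^ (#S * w) * ∏ i ∈ Sᶜ, y i ^ w := by
    rw [prod_pow, prod_piecewise, univ_inter, ← compl_eq_univ_sdiff, prod_const, mul_pow,
      prod_pow, ← pow_mul]
  rw [hneg, hprod]
  ring

theorem mem_ideal_span_X_image_of_eval_eq_zero {σ R : Type*} [CommRing R] [IsDomain R]
    [Infinite R] {s : Set σ} {p : MvPolynomial σ R}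
    (h : ∀ y : σ → R, (∀ i ∈ s, y i = 0) → eval y p = 0) :
    p ∈ Ideal.span (X '' s : Set (MvPolynomial σ R)) := by
  classical
  set I := Ideal.span (X '' s : Set (MvPolynomial σ R))
  let g : σ → MvPolynomial σ R := fun i ↦ if i ∈ s then 0 else X i
  have hg : aeval g p = 0 := MvPolynomial.funext fun y ↦ by
    rw [map_zero, ← h (fun i ↦ eval y (g i)) fun i hi ↦ by simp [g, hi]]
    exact eval₂Hom_bind₁ _ _ _ _
  have hsub : ∀ q, q - aeval g q ∈ I := by
    intro q
    induction q using MvPolynomial.induction_on with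
    | C a => simp
    | add p q hp hq => simpa [add_sub_add_comm] using I.add_mem hp hq
    | mul_X p i hp =>
      have hi : X i - g i ∈ I := by
        by_cases hi : i ∈ s
        · simpa [g, hi] using Ideal.subset_span (Set.mem_image_of_mem X hi)
        · simp [g, hi]
      have : p * X i - aeval g (p * X i) =
          (p - aeval g p) * X i + aeval g p * (X i - g i) := by
        simp only [map_mul, aeval_X]; ring
      rw [this]
      exact I.add_mem (I.mul_mem_right _ hp) (I.mul_mem_left _ hi)
  simpa only [hg, sub_zero] using hsub p

section Triples

variable {σ R : Type*} [CommRing R]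

def VanishesOnTriples (O E : Finset σ) (p : MvPolynomial σ R) : Prop :=
  ∀ a ∈ O, ∀ b ∈ O, a ≠ b → ∀ j ∈ E, ∀ y : σ → R, y a = y j → y b = y j → eval y p = 0

theorem VanishesOnTriples.mono {O E O' E' : Finset σ} {p : MvPolynomial σ R}
    (hp : VanishesOnTriples O E p) (hO : O' ⊆ O) (hE : E' ⊆ E) : VanishesOnTriples O' E' p :=
  fun a ha b hb hab j hj ↦ hp a (hO ha) b (hO hb) hab j (hE hj)

variable [IsDomain R] [Infinite R] [Fintype σ] [DecidableEq σ]

theorem pow_card_sub_one_dvd_identifyVars {S : Finset σ} {j : σ} (hj : j ∉ S)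
    {p : MvPolynomial σ R} (hp : VanishesOnTriples S {j} p) :
    (Polynomial.X - Polynomial.C (X j)) ^ (#S - 1) ∣ identifyVars S p := by
  set G : MvPolynomial σ R := aeval (fun i ↦ if i ∈ S then X i + X j else X i) p
  -- `G` is `p` with the variables of `S` shifted by `X j`, so it vanishes when two of them do
  have hG : ∀ α ∈ G.support, #S - 1 ≤ ∑ i ∈ S, α i := by
    intro α hα
    refine Finset.card_sub_one_le_sum fun a ha b hb hab ↦ ?_
    have hmem : G ∈ Ideal.span (X '' {a, b}) := by
      refine mem_ideal_span_X_image_of_eval_eq_zero fun y hy ↦ ?_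
      refine (eval₂Hom_bind₁ _ _ _ _).trans (hp a ha b hb hab j (mem_singleton_self j) _ ?_ ?_)
      · simp [ha, hj, hy a (by simp)]
      · simp [hb, hj, hy b (by simp)]
    obtain ⟨i, hi, hαi⟩ := mem_ideal_span_X_image.mp hmem α hα
    rcases hi with rfl | rfl
    · exact Or.inl hαi
    · exact Or.inr hαi
  obtain ⟨r, hr⟩ := X_pow_dvd_identifyVars hG
  rw [identifyVars_eq_comp hj, hr, Polynomial.mul_comp, Polynomial.pow_comp, Polynomial.X_comp]
  exact dvd_mul_right _ _

variable {O E : Finset σ} {p : MvPolynomial σ R} {w : ℕ}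

-- `X j` is a root of multiplicity `≥ #S - 1` for `j ∈ E` and a root for `j ∈ O \ S`:
-- more roots than the degree bound `#S * w` allows.
theorem identifyVars_eq_zero_of_forall_insert (hOE : Disjoint O E) (hO : w + 2 ≤ #O)
    (hE : w + 1 ≤ #E) (hp : VanishesOnTriples O E p) {S : Finset σ} (hSO : S ⊆ O)
    (hS : S.Nonempty) (hdeg : (identifyVars S p).natDegree ≤ #S * w)
    (hins : ∀ i ∈ O \ S, identifyVars (insert i S) p = 0) : identifyVars S p = 0 := by
  by_contra hne
  have hnotE : ∀ j ∈ O, j ∉ E := fun j hj ↦ disjoint_left.mp hOE hj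
  let e : σ → ℕ := fun j ↦ if j ∈ E then #S - 1 else 1
  have hdvd : ∀ j ∈ E ∪ O \ S,
      (Polynomial.X - Polynomial.C (X j)) ^ e j ∣ identifyVars S p := by
    intro j hj
    rcases mem_union.mp hj with hjE | hjO
    · simp only [e, if_pos hjE]
      exact pow_card_sub_one_dvd_identifyVars (fun hjS ↦ hnotE j (hSO hjS) hjE)
        (hp.mono hSO (singleton_subset_iff.mpr hjE))
    · simp only [e, if_neg (hnotE j (mem_sdiff.mp hjO).1), pow_one]
      refine Polynomial.dvd_iff_isRoot.mpr ?_
      rw [Polynomial.IsRoot, eval_X_identifyVars_insert, hins j hjO, Polynomial.eval_zero]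
  have hsum := Polynomial.sum_le_natDegree_of_pow_dvd hne X_injective hdvd
  have hsumE : ∑ j ∈ E, e j = #E * (#S - 1) := by
    rw [sum_congr rfl fun j hj ↦ if_pos hj, sum_const, smul_eq_mul]
  have hsumO : ∑ j ∈ O \ S, e j = #O - #S := by
    rw [sum_congr rfl fun j hj ↦ if_neg (hnotE j (mem_sdiff.mp hj).1), sum_const, smul_eq_mul,
      mul_one, card_sdiff_of_subset hSO]
  rw [sum_union (hOE.symm.mono_right sdiff_subset), hsumE, hsumO] at hsum
  obtain ⟨k, hk⟩ : ∃ k, #S = k + 1 := ⟨#S - 1, by have := hS.card_pos; omega⟩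
  have hSO' := card_le_card hSO
  rw [hk] at hsum hdeg hSO'
  simp only [add_tsub_cancel_right] at hsum
  have hEk : (w + 1) * k ≤ #E * k := Nat.mul_le_mul_right k hE
  have hO' := Nat.sub_add_cancel hSO'
  nlinarith

theorem eq_zero_of_vanishesOnTriples (hOE : Disjoint O E) (hO : w + 2 ≤ #O) (hE : w + 1 ≤ #E)
    (hp : VanishesOnTriples O E p) (hdeg : ∀ S ⊆ O, (identifyVars S p).natDegree ≤ #S * w) :
    p = 0 := by
  have key : ∀ S ⊆ O, S.Nonempty → identifyVars S p = 0 := by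
    intro S
    induction hk : #(O \ S) using Nat.strong_induction_on generalizing S with
    | _ k ih =>
      intro hSO hS
      refine identifyVars_eq_zero_of_forall_insert hOE hO hE hp hSO hS (hdeg S hSO)
        fun i hi ↦ ih _ ?_ (insert i S) rfl (insert_subset (mem_sdiff.mp hi).1 hSO)
          (insert_nonempty i S)
      rw [← hk, sdiff_insert]
      exact card_erase_lt_of_mem hi
  obtain ⟨i, hi⟩ : O.Nonempty := card_pos.mp (by omega)
  refine MvPolynomial.funext fun x ↦ ?_
  have h := eval_map_identifyVars {i} p x (x i)
  rwa [key {i} (singleton_subset_iff.mpr hi) (singleton_nonempty i), Polynomial.map_zero,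
    Polynomial.eval_zero, piecewise_singleton, Function.update_eq_self, eq_comm] at h

end Triples

end MvPolynomial

theorem IsBinaryInvariant.eval_eq_eval_neg_inv_mul_prod {r w : ℕ} {f : MvPolynomial (Fin r) ℂ}
    (hf : IsBinaryInvariant r w f) (a : Fin r → ℂ) (ha : ∀ i, a i ≠ 0) :
    eval a f = eval (fun i ↦ -(a i)⁻¹) f * ∏ i, a i ^ w := by
  simpa [div_eq_mul_inv] using hf 0 (-1) 1 0 (by norm_num) a (by simpa using ha)

theorem le_card_filter_val_mod_two (g : ℕ) {r : ℕ} (hr : r < 2) :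
    g + 1 ≤ #{i : Fin (2 * g + 2) | i.val % 2 = r} := by
  have h := card_le_card_of_injOn (s := (univ : Finset (Fin (g + 1))))
    (t := {i : Fin (2 * g + 2) | i.val % 2 = r}) (fun k ↦ ⟨2 * k + r, by omega⟩)
    (fun k _ ↦ by simp; omega) (fun k _ l _ h ↦ by simp [Fin.ext_iff] at h; omega)
  simpa using h

theorem vanishesOnTriples_of_forall_inSU {g : ℕ} (hg : 1 ≤ g)
    {f : MvPolynomial (Fin (2 * g + 2)) ℂ}
    (hSU : ∀ σ : Equiv.Perm (Fin (2 * g + 2)), InSU (2 * g + 2) σ →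
      rename (σ : Fin (2 * g + 2) → Fin (2 * g + 2)) f = f)
    (hvan : ∀ (b : Fin (2 * g - 1) → ℂ) (u : ℂ),
      eval (fun i : Fin (2 * g + 2) =>
        if h : i.val < 2 * g - 1 then b ⟨i.val, h⟩ else u) f = 0) :
    VanishesOnTriples {i | i.val % 2 = 1} {i | i.val % 2 = 0} f := by
  intro a ha b hb hab j hj y hya hyb
  simp only [mem_filter, mem_univ, true_and] at ha hb hj
  obtain ⟨σ, hσ, hσa, hσb, hσj⟩ := Equiv.Perm.exists_fiberwise_apply_eq_triple
    (fun i : Fin (2 * g + 2) ↦ i.val % 2) (j := j) (a' := ⟨2 * g - 1, by omega⟩)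
    (b' := ⟨2 * g + 1, by omega⟩) (j' := ⟨2 * g, by omega⟩) hab (by simp [Fin.ext_iff])
    (by simp; omega) (by simp; omega) (by simp; omega) (by simp; omega) (by simp; omega)
  have hpoint : y ∘ σ = fun i : Fin (2 * g + 2) ↦
      if h : i.val < 2 * g - 1 then y (σ ⟨i.val, by omega⟩) else y j := by
    funext i
    split_ifs with hi
    · rfl
    obtain h | h | h : i = ⟨2 * g - 1, by omega⟩ ∨ i = ⟨2 * g, by omega⟩ ∨
        i = ⟨2 * g + 1, by omega⟩ := by simp only [Fin.ext_iff]; omega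
    · simp [h, hσa, hya]
    · simp [h, hσj]
    · simp [h, hσb, hyb]
  rw [← hSU σ (Or.inl hσ), eval_rename, hpoint]
  exact hvan (fun k ↦ y (σ ⟨k, by omega⟩)) (y j)

/-- If `f ∈ S_{g-1}(2g+2)` is `S_U`-invariant (`g ≥ 2`) and
`f(a₁,…,a_{2g-1},u,u,u) = 0` identically, then `f = 0`. -/
theorem stmt16 (g : ℕ) (hg : 2 ≤ g) (f : MvPolynomial (Fin (2 * g + 2)) ℂ)
    (hinv : IsBinaryInvariant (2 * g + 2) (g - 1) f)
    (hSU : ∀ σ : Equiv.Perm (Fin (2 * g + 2)), InSU (2 * g + 2) σ →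
      rename (σ : Fin (2 * g + 2) → Fin (2 * g + 2)) f = f)
    (hvan : ∀ (b : Fin (2 * g - 1) → ℂ) (u : ℂ),
      eval (fun i : Fin (2 * g + 2) =>
        if h : i.val < 2 * g - 1 then b ⟨i.val, h⟩ else u) f = 0) :
    f = 0 := by
  have hO := le_card_filter_val_mod_two g (r := 1) (by norm_num)
  have hE := le_card_filter_val_mod_two g (r := 0) (by norm_num)
  have hdeg := natDegree_identifyVars_le_of_eval_eq_eval_neg_inv
    hinv.eval_eq_eval_neg_inv_mul_prod
  refine eq_zero_of_vanishesOnTriples ?_ (by omega) (by omega)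
    (vanishesOnTriples_of_forall_inSU (by omega) hSU hvan) fun S _ ↦ hdeg S
  exact disjoint_filter.mpr fun i _ h ↦ by omega
end

section
/- Let g ∈ N and let h ∈ C[a_1,...,a_{2g+2}] be a homogeneous polynomial invariant under the group S_U (permutations stabilizing the parity partition of {1,...,2g+2}), such that h vanishes whenever a_i = a_j for any i ≠ j. Then h = Δ_{B_g} Δ_{U_g} Δ_{U'_g} · f for some polynomial f, where B_g = {1,...,2g+2}, U_g = {1,3,...,2g+1}, U'_g = {2,4,...,2g+2}, and Δ_S = ∏_{i,j∈S, i>j}(a_i − a_j). -/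
/-!
Each `X i - X j` (`i ≠ j`) is prime and, for `i > j`, no two of them are associated, so a
polynomial divisible by each factor of a product `∏ (X i - X j)` is divisible by the product.
Vanishing on the diagonals gives `X i - X j ∣ h` for all `i > j`, so `h = Δ_B q`. A transposition
of two indices of equal parity lies in `S_U` and changes the sign of `Δ_B`, so it changes the sign
of `q`; hence `q` vanishes on those diagonals as well, and `Δ_U Δ_U' ∣ q`.
-/

open MvPolynomial

/-- `Δ_T = ∏_{i,j ∈ T, i>j} (aᵢ - aⱼ)`. -/
noncomputable def DeltaS {n : ℕ} (T : Finset (Fin n)) : MvPolynomial (Fin n) ℂ :=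
  ∏ p ∈ (T ×ˢ T).filter (fun p => p.2 < p.1), (X p.1 - X p.2)

namespace MvPolynomial

variable {R σ : Type*} [CommRing R]

-- As a polynomial in `X i` over the other variables, `X i - X j` is `X - C (X j)`.
theorem prime_X_sub_X [IsDomain R] [DecidableEq σ] {i j : σ} (hij : j ≠ i) :
    Prime (X i - X j : MvPolynomial σ R) := by
  let e := (renameEquiv R (Equiv.optionSubtypeNe i).symm).trans
    (optionEquivLeft R {k : σ // k ≠ i})
  have he : e (X i - X j) = Polynomial.X - Polynomial.C (X ⟨j, hij⟩) := by
    simp [e, Equiv.optionSubtypeNe_symm_of_ne hij, optionEquivLeft_X_none,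
      optionEquivLeft_X_some]
  rw [← MulEquiv.prime_iff e.toMulEquiv]
  exact he ▸ Polynomial.prime_X_sub_C _

theorem eq_or_eq_of_X_sub_X_dvd [Nontrivial R] [DecidableEq σ] {i j k l : σ}
    (h : (X i - X j : MvPolynomial σ R) ∣ X k - X l) (hkl : k ≠ l) :
    k = i ∨ k = j := by
  by_contra! hk
  obtain ⟨c, hc⟩ := h
  have := congrArg (eval (Pi.single k (1 : R))) hc
  simp [hk.1.symm, hk.2.symm, hkl.symm] at this

theorem eq_of_X_sub_X_dvd_X_sub_X [Nontrivial R] [LinearOrder σ] {i j k l : σ}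
    (hji : j < i) (hlk : l < k) (h : (X i - X j : MvPolynomial σ R) ∣ X k - X l) :
    k = i ∧ l = j := by
  have hl : l = i ∨ l = j := by
    refine eq_or_eq_of_X_sub_X_dvd (R := R) ?_ hlk.ne
    rwa [← neg_sub (X k), dvd_neg]
  rcases eq_or_eq_of_X_sub_X_dvd h hlk.ne' with rfl | rfl <;> rcases hl with rfl | rfl <;>
    simp_all [lt_asymm hji]

theorem prod_X_sub_X_dvd [IsDomain R] [LinearOrder σ] {S : Finset (σ × σ)}
    (hS : ∀ p ∈ S, p.2 < p.1) {q : MvPolynomial σ R} (hq : ∀ p ∈ S, X p.1 - X p.2 ∣ q) :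
    ∏ p ∈ S, (X p.1 - X p.2) ∣ q := by
  induction S using Finset.induction_on with
  | empty => simp
  | insert p S hpS ih =>
    simp only [Finset.mem_insert, forall_eq_or_imp] at hS hq
    obtain ⟨c, rfl⟩ := ih hS.2 hq.2
    have hprime := prime_X_sub_X (R := R) hS.1.ne
    have hndvd : ¬ X p.1 - X p.2 ∣ ∏ r ∈ S, (X r.1 - X r.2 : MvPolynomial σ R) := by
      rw [hprime.dvd_finsetProd_iff]
      rintro ⟨r, hrS, hr⟩
      obtain ⟨h1, h2⟩ := eq_of_X_sub_X_dvd_X_sub_X hS.1 (hS.2 r hrS) hr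
      exact hpS (Prod.ext h1 h2 ▸ hrS)
    obtain ⟨d, rfl⟩ := (hprime.dvd_or_dvd hq.1).resolve_left hndvd
    rw [Finset.prod_insert hpS]
    exact ⟨d, by ring⟩

-- Modulo `X i - X j`, substituting `X i` for `X j` does nothing.
theorem X_sub_X_dvd_sub_rename_update [DecidableEq σ] (i j : σ) (p : MvPolynomial σ R) :
    (X i - X j : MvPolynomial σ R) ∣ p - rename (R := R) (Function.update id j i) p := by
  let I := Ideal.span {(X i - X j : MvPolynomial σ R)}
  have hφ : (Ideal.Quotient.mkₐ R I).comp (rename (R := R) (Function.update id j i)) =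
      Ideal.Quotient.mkₐ R I := by
    refine algHom_ext fun k => ?_
    rcases eq_or_ne k j with rfl | hk
    · simpa using
        Ideal.Quotient.eq.mpr (Ideal.mem_span_singleton_self (X i - X k : MvPolynomial σ R))
    · simp [hk]
  rw [← Ideal.mem_span_singleton, ← Ideal.Quotient.mk_eq_mk_iff_sub_mem]
  exact (congrArg (fun f => f p) hφ).symm

theorem X_sub_X_dvd_of_eval_eq_zero [IsDomain R] [Infinite R] [DecidableEq σ] {i j : σ}
    {p : MvPolynomial σ R} (hp : ∀ a : σ → R, a i = a j → eval a p = 0) :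
    X i - X j ∣ p := by
  have hzero : rename (Function.update id j i) p = 0 := by
    refine MvPolynomial.funext fun a => ?_
    rw [eval_rename, map_zero]
    apply hp
    rcases eq_or_ne i j with rfl | hij <;> simp [*]
  simpa [hzero] using X_sub_X_dvd_sub_rename_update i j p

theorem X_sub_X_dvd_of_rename_swap_eq_neg [IsDomain R] [Infinite R] [NeZero (2 : R)]
    [DecidableEq σ] {i j : σ} {p : MvPolynomial σ R}
    (hp : rename (Equiv.swap i j) p = -p) : X i - X j ∣ p := by
  refine X_sub_X_dvd_of_eval_eq_zero fun a ha => ?_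
  have hswap : a ∘ Equiv.swap i j = a := by
    rw [Equiv.comp_swap_eq_update, ha]; simp [ha]
  have h := congrArg (eval a) hp
  rw [eval_rename, hswap, map_neg, eq_neg_iff_add_eq_zero, ← two_mul] at h
  exact (mul_eq_zero.mp h).resolve_left two_ne_zero

end MvPolynomial

theorem DeltaS_univ_eq_det_vandermonde (n : ℕ) :
    DeltaS (Finset.univ : Finset (Fin n)) = (Matrix.vandermonde X).det := by
  rw [Matrix.det_vandermonde, DeltaS, Finset.prod_filter, Finset.univ_product_univ,
    Fintype.prod_prod_type, Finset.prod_comm]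
  refine Finset.prod_congr rfl fun i _ => ?_
  rw [← Finset.prod_filter]
  congr 1
  ext j; simp

theorem rename_DeltaS_univ {n : ℕ} (τ : Equiv.Perm (Fin n)) :
    rename τ (DeltaS Finset.univ) =
      ((Equiv.Perm.sign τ : ℤ) : MvPolynomial (Fin n) ℂ) * DeltaS Finset.univ := by
  have hmap : (rename (R := ℂ) τ).mapMatrix (Matrix.vandermonde X) =
      (Matrix.vandermonde X).submatrix τ id := by
    ext r c; simp [Matrix.vandermonde_apply]
  rw [DeltaS_univ_eq_det_vandermonde, AlgHom.map_det, hmap, Matrix.det_permute]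

theorem DeltaS_ne_zero {n : ℕ} (T : Finset (Fin n)) : DeltaS T ≠ 0 :=
  Finset.prod_ne_zero_iff.mpr fun _ hp =>
    sub_ne_zero.mpr (X_injective.ne (Finset.mem_filter.mp hp).2.ne')

theorem DeltaS_mul_DeltaS_of_disjoint {n : ℕ} {T T' : Finset (Fin n)} (h : Disjoint T T') :
    DeltaS T * DeltaS T' = ∏ p ∈ (T ×ˢ T).filter (fun p => p.2 < p.1) ∪
      (T' ×ˢ T').filter (fun p => p.2 < p.1), (X p.1 - X p.2) := by
  refine (Finset.prod_union ?_).symm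
  exact Finset.disjoint_filter_filter (Finset.disjoint_product.mpr (Or.inl h))

theorem InSU_swap {n : ℕ} {i j : Fin n} (h : i.val % 2 = j.val % 2) :
    InSU n (Equiv.swap i j) := by
  left
  intro k
  rcases eq_or_ne k i with rfl | hki
  · simp [h]
  rcases eq_or_ne k j with rfl | hkj
  · simp [h]
  · rw [Equiv.swap_apply_of_ne_of_ne hki hkj]

theorem stmt17_general (g : ℕ) (h : MvPolynomial (Fin (2 * g + 2)) ℂ)
    (hSU : ∀ σ : Equiv.Perm (Fin (2 * g + 2)), InSU (2 * g + 2) σ →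
      rename (σ : Fin (2 * g + 2) → Fin (2 * g + 2)) h = h)
    (hvan : ∀ a : Fin (2 * g + 2) → ℂ,
      (∃ i j : Fin (2 * g + 2), i ≠ j ∧ a i = a j) → eval a h = 0) :
    ∃ f : MvPolynomial (Fin (2 * g + 2)) ℂ,
      h = DeltaS (Finset.univ : Finset (Fin (2 * g + 2))) *
        DeltaS (Finset.univ.filter (fun i : Fin (2 * g + 2) => i.val % 2 = 0)) *
        DeltaS (Finset.univ.filter (fun i : Fin (2 * g + 2) => i.val % 2 = 1)) * f := by
  obtain ⟨q, rfl⟩ : DeltaS Finset.univ ∣ h :=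
    prod_X_sub_X_dvd (fun p hp => (Finset.mem_filter.mp hp).2) fun p hp =>
      X_sub_X_dvd_of_eval_eq_zero fun a ha =>
        hvan a ⟨p.1, p.2, (Finset.mem_filter.mp hp).2.ne', ha⟩
  have hq_alt : ∀ i j : Fin (2 * g + 2), i ≠ j → i.val % 2 = j.val % 2 →
      rename (Equiv.swap i j) q = -q := by
    intro i j hij hpar
    have hfix := hSU _ (InSU_swap hpar)
    rw [map_mul, rename_DeltaS_univ, Equiv.Perm.sign_swap hij, Units.val_neg, Units.val_one,
      Int.cast_neg, Int.cast_one] at hfix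
    refine mul_left_cancel₀ (DeltaS_ne_zero Finset.univ) ?_
    linear_combination -hfix
  have hdisj : Disjoint (Finset.univ.filter (fun i : Fin (2 * g + 2) => i.val % 2 = 0))
      (Finset.univ.filter (fun i => i.val % 2 = 1)) :=
    Finset.disjoint_filter.mpr fun i _ h0 h1 => by omega
  obtain ⟨f, rfl⟩ : DeltaS (Finset.univ.filter fun i : Fin (2 * g + 2) => i.val % 2 = 0) *
      DeltaS (Finset.univ.filter fun i : Fin (2 * g + 2) => i.val % 2 = 1) ∣ q := by
    rw [DeltaS_mul_DeltaS_of_disjoint hdisj]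
    refine prod_X_sub_X_dvd (fun p hp => ?_) fun p hp =>
      X_sub_X_dvd_of_rename_swap_eq_neg (hq_alt p.1 p.2 ?_ ?_) <;>
    · simp only [Finset.mem_union, Finset.mem_filter, Finset.mem_product, Finset.mem_univ,
        true_and] at hp
      omega
  exact ⟨f, by ring⟩

/-- A homogeneous `S_U`-invariant polynomial vanishing whenever two variables are
equal is divisible by `Δ_{B_g} Δ_{U_g} Δ_{U'_g}`. -/
theorem stmt17 (g : ℕ) (hg : 1 ≤ g) (d : ℕ) (h : MvPolynomial (Fin (2 * g + 2)) ℂ)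
    (hhom : h.IsHomogeneous d)
    (hSU : ∀ σ : Equiv.Perm (Fin (2 * g + 2)), InSU (2 * g + 2) σ →
      rename (σ : Fin (2 * g + 2) → Fin (2 * g + 2)) h = h)
    (hvan : ∀ a : Fin (2 * g + 2) → ℂ,
      (∃ i j : Fin (2 * g + 2), i ≠ j ∧ a i = a j) → eval a h = 0) :
    ∃ f : MvPolynomial (Fin (2 * g + 2)) ℂ,
      h = DeltaS (Finset.univ : Finset (Fin (2 * g + 2))) *
        DeltaS (Finset.univ.filter (fun i : Fin (2 * g + 2) => i.val % 2 = 0)) *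
        DeltaS (Finset.univ.filter (fun i : Fin (2 * g + 2) => i.val % 2 = 1)) * f :=
  stmt17_general g h hSU hvan
end

section
/- For nonnegative integers d_1, d_2, d with d_1, d_2 ≤ d ≤ d_1 + d_2, the number N of subspaces V ⊆ F_2^{m} ⊕ F_2^{n} of dimension d with π_1 V = V_1 and π_2 V = V_2, for fixed subspaces V_1 ⊆ F_2^m of dimension d_1 and V_2 ⊆ F_2^n of dimension d_2 (where π_i are the coordinate projections), is N = ∏_{j=0}^{d_1+d_2-d-1} (2^{d_1} − 2^j)(2^{d_2} − 2^j)/(2^{d_1+d_2-d} − 2^j); moreover these counts satisfy the identity (−1)^n 2^{n(n−1)/2} · (−1)^m 2^{m(m−1)/2} = Σ_{i=0}^{n+m} (−1)^i 2^{i(i−1)/2} N_{n,m;i} for all n, m ≥ 0. -/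
/-!
Subspaces of `A × B` with projections `V₁, V₂` are the subspaces of `V₁ × V₂` projecting onto
both factors. A subspace `V ≤ M × N` whose first projection is onto is
`{(x, y) | y ≡ φ x mod L}` for `L = {y | (0, y) ∈ V}` and a unique linear `φ : M → N ⧸ L`; its
second projection is onto iff `φ` is, and `dim V = dim M + dim L` (Goursat). Over `𝔽_q`, count
injective linear maps through linearly independent families, subspaces of a given codimension
through the dual space, and surjections through their kernels: the number of such `V` of
dimension `d`, times `|GL_k(𝔽_q)|`, is `|Inj(𝔽_q^k, M)| · |Inj(𝔽_q^k, N)|` for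
`k = dim M + dim N - d`, which is the product formula.

Writing `|Inj(𝔽_q^k, 𝔽_q^n)| = q^(k choose 2) ∏_{j<k} (q^(n-j) - 1)` and the quotient by
`|GL_k|` as a Gaussian binomial, the alternating identity reduces, after `i ↦ n + m - i` and
`C(n+m-k, 2) + C(k, 2) = C(n, 2) + C(m, 2) + (n-k)(m-k)`, to
`∑_k (-1)^k q^((n-k)(m-k)) ∏_{j<k} (q^(n-j) - 1) [m choose k]_q = 1`, proved by induction on `m`
with the `q`-Pascal rule.
-/

/-- `N_{d₁,d₂;d}`: the number of subspaces `V ⊆ 𝔽₂^{d₁} ⊕ 𝔽₂^{d₂}` of dimension `d`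
projecting onto each full factor. -/
noncomputable def Ncount (d1 d2 d : ℕ) : ℕ :=
  Nat.card {V : Submodule (ZMod 2) ((Fin d1 → ZMod 2) × (Fin d2 → ZMod 2)) //
    Module.finrank (ZMod 2) V = d ∧
    Submodule.map (LinearMap.fst (ZMod 2) (Fin d1 → ZMod 2) (Fin d2 → ZMod 2)) V = ⊤ ∧
    Submodule.map (LinearMap.snd (ZMod 2) (Fin d1 → ZMod 2) (Fin d2 → ZMod 2)) V = ⊤}

open Finset Module Function

section QAnalogues

variable {R : Type*} [CommRing R] (q : R)

/-- A `q`-analogue of `n.descFactorial k`, unnormalised: its factors are `q^i - 1`, not the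
`q`-integers `(q^i - 1)/(q - 1)`. -/
def qDescFactorial (n k : ℕ) : R := ∏ j ∈ range k, (q ^ (n - j) - 1)

def gaussBinom : ℕ → ℕ → R
  | _, 0 => 1
  | 0, _ + 1 => 0
  | m + 1, k + 1 => gaussBinom m (k + 1) + q ^ (m - k) * gaussBinom m k

@[simp] lemma gaussBinom_zero_right (m : ℕ) : gaussBinom q m 0 = 1 := by
  cases m <;> rfl

lemma gaussBinom_succ_succ (m k : ℕ) :
    gaussBinom q (m + 1) (k + 1) = gaussBinom q m (k + 1) + q ^ (m - k) * gaussBinom q m k := rfl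

lemma gaussBinom_eq_zero_of_lt {m k : ℕ} (h : m < k) : gaussBinom q m k = 0 := by
  induction m generalizing k with
  | zero => obtain ⟨k, rfl⟩ := Nat.exists_eq_add_one_of_ne_zero h.ne'; rfl
  | succ m ih =>
    obtain ⟨k, rfl⟩ := Nat.exists_eq_add_one_of_ne_zero (Nat.ne_zero_of_lt h)
    rw [gaussBinom_succ_succ, ih (by omega), ih (by omega), mul_zero, add_zero]

@[simp] lemma qDescFactorial_zero_right (n : ℕ) : qDescFactorial q n 0 = 1 := prod_range_zero _

lemma qDescFactorial_succ_right (n k : ℕ) :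
    qDescFactorial q n (k + 1) = qDescFactorial q n k * (q ^ (n - k) - 1) :=
  prod_range_succ _ _

lemma qDescFactorial_succ_succ (n k : ℕ) :
    qDescFactorial q (n + 1) (k + 1) = qDescFactorial q n k * (q ^ (n + 1) - 1) := by
  simp [qDescFactorial, prod_range_succ']

lemma qDescFactorial_eq_zero_of_lt {n k : ℕ} (h : n < k) : qDescFactorial q n k = 0 :=
  prod_eq_zero (mem_range.mpr h) (by simp)

theorem gaussBinom_mul_qDescFactorial_self (m k : ℕ) :
    gaussBinom q m k * qDescFactorial q k k = qDescFactorial q m k := by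
  induction m generalizing k with
  | zero => cases k <;> simp [gaussBinom, qDescFactorial_eq_zero_of_lt]
  | succ m ih =>
    cases k with
    | zero => simp
    | succ k =>
      rcases lt_or_ge m k with hmk | hkm
      · rw [gaussBinom_eq_zero_of_lt q (Nat.succ_lt_succ hmk),
          qDescFactorial_eq_zero_of_lt q (Nat.succ_lt_succ hmk), zero_mul]
      · have hpow : q ^ (m - k) * q ^ (k + 1) = q ^ (m + 1) := by
          rw [← pow_add]; congr 1; omega
        rw [gaussBinom_succ_succ, qDescFactorial_succ_succ q m k, ← hpow]
        linear_combination ih (k + 1) + q ^ (m - k) * (q ^ (k + 1) - 1) * ih k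
          + qDescFactorial_succ_right q m k
          + q ^ (m - k) * gaussBinom q m k * qDescFactorial_succ_succ q k k

/-- The `q`-Pascal rule splits each term of the sum for `m + 1` in
`sum_gaussBinom_mul_qDescFactorial` into two, and these recombine into the terms for `m`. -/
lemma neg_one_pow_mul_qDescFactorial_telescope {n m k : ℕ} (hk : k ≤ m) :
    (-1) ^ k * q ^ ((n - k) * (m + 1 - k)) * qDescFactorial q n k
      + (-1) ^ (k + 1) * q ^ ((n - (k + 1)) * (m + 1 - (k + 1))) * qDescFactorial q n (k + 1)
        * q ^ (m - k)
      = (-1) ^ k * q ^ ((n - k) * (m - k)) * qDescFactorial q n k := by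
  rw [qDescFactorial_succ_right, Nat.add_sub_add_right, Nat.sub_add_comm hk]
  rcases lt_or_ge k n with hkn | hnk
  · obtain ⟨a, ha⟩ := Nat.exists_eq_add_of_lt hkn
    rw [show n - k = a + 1 by omega, show n - (k + 1) = a by omega]
    ring
  · simp [Nat.sub_eq_zero_of_le hnk]

theorem sum_gaussBinom_mul_qDescFactorial (n m : ℕ) :
    ∑ k ∈ range (m + 1),
      (-1) ^ k * q ^ ((n - k) * (m - k)) * qDescFactorial q n k * gaussBinom q m k = 1 := by
  induction m with
  | zero => simp
  | succ m ih =>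
    set t : ℕ → R := fun k => (-1) ^ k * q ^ ((n - k) * (m + 1 - k)) * qDescFactorial q n k
    calc ∑ k ∈ range (m + 1 + 1), t k * gaussBinom q (m + 1) k
        = ∑ k ∈ range (m + 1), (t (k + 1) * gaussBinom q m (k + 1)
            + t (k + 1) * q ^ (m - k) * gaussBinom q m k) + t 0 * gaussBinom q m 0 := by
          simp only [sum_range_succ' _ (m + 1), gaussBinom_succ_succ, gaussBinom_zero_right,
            mul_add, mul_assoc]
      _ = ∑ k ∈ range (m + 1 + 1), t k * gaussBinom q m k
            + ∑ k ∈ range (m + 1), t (k + 1) * q ^ (m - k) * gaussBinom q m k := by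
          rw [sum_add_distrib, sum_range_succ' (fun k => t k * gaussBinom q m k)]
          ring
      _ = ∑ k ∈ range (m + 1), (t k + t (k + 1) * q ^ (m - k)) * gaussBinom q m k := by
          rw [sum_range_succ, gaussBinom_eq_zero_of_lt q m.lt_succ_self, mul_zero, add_zero,
            ← sum_add_distrib]
          simp only [add_mul]
      _ = 1 := by
          rw [← ih]
          refine sum_congr rfl fun k hk => ?_
          rw [neg_one_pow_mul_qDescFactorial_telescope q (Nat.lt_succ_iff.mp (mem_range.mp hk))]

lemma prod_pow_sub_pow_eq_pow_mul_qDescFactorial {n k : ℕ} (hk : k ≤ n) :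
    ∏ j ∈ range k, (q ^ n - q ^ j) = q ^ k.choose 2 * qDescFactorial q n k := by
  rw [Nat.choose_two_right, ← sum_range_id, ← prod_pow_eq_pow_sum, qDescFactorial,
    ← prod_mul_distrib]
  refine prod_congr rfl fun j hj => ?_
  rw [mul_sub, mul_one, ← pow_add, Nat.add_sub_cancel' (by simp at hj; omega)]

lemma choose_two_add_choose_two {n m k : ℕ} (hn : k ≤ n) (hm : k ≤ m) :
    (n + m - k).choose 2 + k.choose 2 = n.choose 2 + m.choose 2 + (n - k) * (m - k) := by
  obtain ⟨a, rfl⟩ := Nat.exists_eq_add_of_le hn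
  obtain ⟨b, rfl⟩ := Nat.exists_eq_add_of_le hm
  rw [show k + a + (k + b) - k = k + a + b by omega, Nat.add_sub_cancel_left,
    Nat.add_sub_cancel_left]
  apply Nat.cast_injective (R := ℚ)
  push_cast [Nat.cast_choose_two]
  ring

lemma neg_one_pow_sub {a k : ℕ} (hk : k ≤ a) : (-1 : R) ^ (a - k) = (-1) ^ a * (-1) ^ k := by
  calc (-1 : R) ^ (a - k) = (-1) ^ (a - k) * ((-1) ^ 2) ^ k := by simp
    _ = (-1) ^ a * (-1) ^ k := by rw [← pow_mul, ← pow_add, ← pow_add]; congr 1; omega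

theorem alternating_sum_pow_choose_two_mul (n m : ℕ) :
    ∑ k ∈ range (n + m + 1), (-1) ^ (n + m - k) * q ^ (n + m - k).choose 2 *
        (q ^ k.choose 2 * qDescFactorial q n k * gaussBinom q m k) =
      (-1) ^ n * q ^ n.choose 2 * ((-1) ^ m * q ^ m.choose 2) := by
  have hterm : ∀ k ∈ range (n + m + 1), (-1) ^ (n + m - k) * q ^ (n + m - k).choose 2 *
      (q ^ k.choose 2 * qDescFactorial q n k * gaussBinom q m k) =
        (-1) ^ n * q ^ n.choose 2 * ((-1) ^ m * q ^ m.choose 2) *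
          ((-1) ^ k * q ^ ((n - k) * (m - k)) * qDescFactorial q n k * gaussBinom q m k) := by
    intro k hk
    rcases lt_or_ge n k with hnk | hkn
    · simp [qDescFactorial_eq_zero_of_lt q hnk]
    rcases lt_or_ge m k with hmk | hkm
    · simp [gaussBinom_eq_zero_of_lt q hmk]
    have hpow : q ^ (n + m - k).choose 2 * q ^ k.choose 2 =
        q ^ n.choose 2 * q ^ m.choose 2 * q ^ ((n - k) * (m - k)) := by
      rw [← pow_add, ← pow_add, ← pow_add, choose_two_add_choose_two hkn hkm]
    rw [neg_one_pow_sub (by simp at hk; omega), pow_add]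
    linear_combination (-1) ^ n * (-1) ^ m * (-1) ^ k * qDescFactorial q n k *
      gaussBinom q m k * hpow
  have hsub : range (m + 1) ⊆ range (n + m + 1) := range_subset_range.mpr (by omega)
  rw [sum_congr rfl hterm, ← mul_sum, ← sum_subset hsub fun k _ hk => by
    simp [gaussBinom_eq_zero_of_lt q (show m < k by simp at hk; omega)],
    sum_gaussBinom_mul_qDescFactorial, mul_one]

end QAnalogues

lemma prod_pow_sub_pow_mul_div_eq_mul_gaussBinom {q : ℚ} (hq : 1 < q) {n m k : ℕ} (hn : k ≤ n)
    (hm : k ≤ m) :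
    ∏ j ∈ range k, (q ^ n - q ^ j) * (q ^ m - q ^ j) / (q ^ k - q ^ j) =
      q ^ k.choose 2 * qDescFactorial q n k * gaussBinom q m k := by
  have hne : qDescFactorial q k k ≠ 0 :=
    prod_ne_zero_iff.mpr fun j hj => sub_ne_zero.mpr (one_lt_pow₀ hq (by simp at hj; omega)).ne'
  rw [prod_div_distrib, prod_mul_distrib, prod_pow_sub_pow_eq_pow_mul_qDescFactorial q hn,
    prod_pow_sub_pow_eq_pow_mul_qDescFactorial q hm,
    prod_pow_sub_pow_eq_pow_mul_qDescFactorial q le_rfl, ← gaussBinom_mul_qDescFactorial_self q m k]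
  field_simp

namespace Submodule

variable {R M N : Type*} [Ring R] [AddCommGroup M] [Module R M] [AddCommGroup N] [Module R N]

def graphMod (L : Submodule R N) (φ : M →ₗ[R] N ⧸ L) : Submodule R (M × N) :=
  (LinearMap.graph φ).comap (LinearMap.prodMap LinearMap.id L.mkQ)

variable {L : Submodule R N} {φ : M →ₗ[R] N ⧸ L}

@[simp] lemma mem_graphMod {x : M} {y : N} : (x, y) ∈ graphMod L φ ↔ L.mkQ y = φ x := Iff.rfl

lemma comap_inr_graphMod : (graphMod L φ).comap (LinearMap.inr R M N) = L := by
  ext y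
  simp [Submodule.Quotient.mk_eq_zero]

lemma map_fst_graphMod : (graphMod L φ).map (LinearMap.fst R M N) = ⊤ := by
  refine eq_top_iff.mpr fun x _ => ?_
  obtain ⟨y, hy⟩ := L.mkQ_surjective (φ x)
  exact ⟨(x, y), mem_graphMod.mpr hy, rfl⟩

lemma map_snd_graphMod : (graphMod L φ).map (LinearMap.snd R M N) = ⊤ ↔ Surjective φ := by
  constructor
  · intro h z
    obtain ⟨y, rfl⟩ := L.mkQ_surjective z
    obtain ⟨⟨x, y'⟩, hxy, rfl⟩ := h.ge (mem_top (x := y))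
    exact ⟨x, (mem_graphMod.mp hxy).symm⟩
  · refine fun h => eq_top_iff.mpr fun y _ => ?_
    obtain ⟨x, hx⟩ := h (L.mkQ y)
    exact ⟨(x, y), mem_graphMod.mpr hx.symm, rfl⟩

lemma exists_eq_graphMod {V : Submodule R (M × N)} (hV : V.map (LinearMap.fst R M N) = ⊤) :
    ∃ φ : M →ₗ[R] N ⧸ V.comap (LinearMap.inr R M N), V = graphMod _ φ := by
  set L := V.comap (LinearMap.inr R M N)
  let π : M × N →ₗ[R] M × (N ⧸ L) := LinearMap.prodMap LinearMap.id L.mkQ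
  have hfst : Surjective (Prod.fst ∘ (π ∘ₗ V.subtype)) := fun x => by
    obtain ⟨v, hv, rfl⟩ := hV.ge (mem_top (x := x))
    exact ⟨⟨v, hv⟩, rfl⟩
  have hline : ∀ v w : V, (π v).1 = (π w).1 → (π v).2 = (π w).2 := fun v w h => by
    have : ((0 : M), (v : M × N).2 - (w : M × N).2) ∈ V := by
      convert V.sub_mem v.2 w.2 using 1
      exact Prod.ext (sub_eq_zero.mpr h).symm rfl
    exact (Submodule.Quotient.eq L).mpr this
  obtain ⟨φ, hφ⟩ := LinearMap.exists_range_eq_graph hfst hline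
  refine ⟨φ, ?_⟩
  have hker : LinearMap.ker π ≤ V := by
    rintro ⟨x, y⟩ hxy
    obtain ⟨rfl, hy⟩ : x = 0 ∧ y ∈ L := by simpa [π] using hxy
    exact hy
  rw [graphMod, ← hφ, LinearMap.range_comp, range_subtype, comap_map_eq, sup_eq_left.mpr hker]

lemma graphMod_injective : Injective (graphMod (M := M) L) := fun φ ψ h => by
  ext x
  obtain ⟨y, hy⟩ := L.mkQ_surjective (φ x)
  have hxy : (x, y) ∈ graphMod L ψ := h ▸ mem_graphMod.mpr hy
  rw [← hy, mem_graphMod.mp hxy]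

theorem finrank_eq_add_finrank_comap_inr {K M N : Type*} [DivisionRing K] [AddCommGroup M]
    [Module K M] [AddCommGroup N] [Module K N] [FiniteDimensional K M] [FiniteDimensional K N]
    {V : Submodule K (M × N)} (hV : V.map (LinearMap.fst K M N) = ⊤) :
    finrank K V = finrank K M + finrank K (V.comap (LinearMap.inr K M N)) := by
  have hker : finrank K (V.comap (LinearMap.inr K M N)) =
      finrank K (LinearMap.ker ((LinearMap.fst K M N).domRestrict V)) := by
    rw [LinearMap.ker_domRestrict, LinearMap.ker_fst, ← finrank_map_subtype_eq,
      map_comap_subtype, inf_comm, ← map_comap_eq]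
    exact (equivMapOfInjective _ LinearMap.inr_injective _).finrank_eq
  have := ((LinearMap.fst K M N).domRestrict V).finrank_range_add_finrank_ker
  rw [LinearMap.range_domRestrict, hV, finrank_top] at this
  omega

end Submodule

open Submodule in
theorem card_submodule_prod_eq_card_submodule_prod_top {K A B : Type*} [Semiring K]
    [AddCommMonoid A] [Module K A] [AddCommMonoid B] [Module K B] (V₁ : Submodule K A)
    (V₂ : Submodule K B) (d : ℕ) :
    Nat.card {V : Submodule K (A × B) // finrank K V = d ∧
        V.map (LinearMap.fst K A B) = V₁ ∧ V.map (LinearMap.snd K A B) = V₂} =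
      Nat.card {V : Submodule K (V₁ × V₂) // finrank K V = d ∧
        V.map (LinearMap.fst K V₁ V₂) = ⊤ ∧ V.map (LinearMap.snd K V₁ V₂) = ⊤} := by
  set ι := V₁.subtype.prodMap V₂.subtype
  have hι : Injective ι := V₁.injective_subtype.prodMap V₂.injective_subtype
  have hcond (W : Submodule K (V₁ × V₂)) :
      (finrank K (W.map ι) = d ∧ (W.map ι).map (LinearMap.fst K A B) = V₁ ∧
        (W.map ι).map (LinearMap.snd K A B) = V₂) ↔
      (finrank K W = d ∧ W.map (LinearMap.fst K V₁ V₂) = ⊤ ∧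
        W.map (LinearMap.snd K V₁ V₂) = ⊤) := by
    rw [← (equivMapOfInjective ι hι W).finrank_eq, ← map_comp,
      ← map_comp, show LinearMap.fst K A B ∘ₗ ι = V₁.subtype ∘ₗ LinearMap.fst K V₁ V₂ from rfl,
      show LinearMap.snd K A B ∘ₗ ι = V₂.subtype ∘ₗ LinearMap.snd K V₁ V₂ from rfl,
      map_comp, map_comp,
      (map_injective_of_injective V₁.injective_subtype).eq_iff' (map_subtype_top V₁),
      (map_injective_of_injective V₂.injective_subtype).eq_iff' (map_subtype_top V₂)]
  symm
  refine Nat.card_congr (Equiv.ofBijective (fun W => ⟨W.1.map ι, (hcond W.1).mpr W.2⟩)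
    ⟨fun W₁ W₂ h => Subtype.ext (map_injective_of_injective hι (congrArg Subtype.val h)), ?_⟩)
  rintro ⟨V, hV⟩
  have hle : V ≤ LinearMap.range ι := by
    rw [LinearMap.range_prodMap, range_subtype, range_subtype]
    exact fun v hv => mem_prod.mpr
      ⟨hV.2.1 ▸ mem_map_of_mem hv, hV.2.2 ▸ mem_map_of_mem hv⟩
  refine ⟨⟨V.comap ι, (hcond _).mp ?_⟩, Subtype.ext (map_comap_eq_self hle)⟩
  rwa [map_comap_eq_self hle]

instance {R M N : Type*} [Semiring R] [AddCommMonoid M] [Module R M] [AddCommMonoid N] [Module R N]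
    [Finite M] [Finite N] : Finite (M →ₗ[R] N) :=
  Finite.of_injective _ DFunLike.coe_injective

instance {R M N : Type*} [Semiring R] [AddCommMonoid M] [Module R M] [AddCommMonoid N] [Module R N]
    [Finite M] [Finite N] : Finite (M ≃ₗ[R] N) :=
  Finite.of_injective _ DFunLike.coe_injective

lemma Nat.card_sigma_of_forall_card_eq {α : Type*} [Finite α] {β : α → Type*} [∀ a, Finite (β a)]
    {c : ℕ} (h : ∀ a, Nat.card (β a) = c) : Nat.card (Σ a, β a) = Nat.card α * c := by
  have := Fintype.ofFinite α
  rw [Nat.card_sigma, sum_congr rfl fun a _ => h a, sum_const, Finset.card_univ, smul_eq_mul,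
    Nat.card_eq_fintype_card]

lemma Nat.cast_prod_pow_sub_pow {R : Type*} [CommRing R] {q n k : ℕ} (hq : 1 ≤ q) (hk : k ≤ n) :
    ((∏ j ∈ range k, (q ^ n - q ^ j) : ℕ) : R) = ∏ j ∈ range k, ((q : R) ^ n - q ^ j) := by
  rw [Nat.cast_prod]
  refine prod_congr rfl fun j hj => ?_
  rw [Nat.cast_sub (Nat.pow_le_pow_right hq (by simp at hj; omega))]
  push_cast
  rfl

section Counting

variable {K : Type*} [Field K] [Fintype K]
  {M N U V W : Type*} [AddCommGroup M] [Module K M] [Finite M] [AddCommGroup N] [Module K N]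
  [Finite N] [AddCommGroup U] [Module K U] [Finite U] [AddCommGroup V] [Module K V] [Finite V]
  [AddCommGroup W] [Module K W] [Finite W]

local notation "q" => Fintype.card K

theorem card_injective_linearMap_fin {k : ℕ} (hk : k ≤ finrank K V) :
    Nat.card {f : (Fin k → K) →ₗ[K] V // Injective f} =
      ∏ j ∈ range k, (q ^ finrank K V - q ^ j) := by
  have e : {s : Fin k → V // LinearIndependent K s} ≃ {f : (Fin k → K) →ₗ[K] V // Injective f} :=
    (LinearEquiv.piRing K V (Fin k) K).symm.toEquiv.subtypeEquiv fun s => by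
      have : (LinearEquiv.piRing K V (Fin k) K).symm s = Fintype.linearCombination K s :=
        LinearMap.ext fun x => by
          simp [LinearEquiv.piRing_symm_apply, Fintype.linearCombination_apply]
      rw [linearIndependent_iff_injective_fintypeLinearCombination, ← this]
      rfl
  rw [← Nat.card_congr e, card_linearIndependent hk, Fin.prod_univ_eq_prod_range
    (fun j => q ^ finrank K V - q ^ j)]

theorem card_linearEquiv {r : ℕ} (hU : finrank K U = r) (hW : finrank K W = r) :
    Nat.card (U ≃ₗ[K] W) = ∏ j ∈ range r, (q ^ r - q ^ j) := by
  let e₀ : (Fin r → K) ≃ₗ[K] U := LinearEquiv.ofFinrankEq _ _ (by simpa using hU.symm)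
  have hdim : finrank K (Fin r → K) = finrank K W := by simpa using hW.symm
  have e : (U ≃ₗ[K] W) ≃ {f : (Fin r → K) →ₗ[K] W // Injective f} :=
    { toFun g := ⟨(e₀.trans g).toLinearMap, (e₀.trans g).injective⟩
      invFun f := e₀.symm.trans (f.1.linearEquivOfInjective f.2 hdim)
      left_inv g := by ext; simp
      right_inv f := by ext; simp }
  rw [Nat.card_congr e, card_injective_linearMap_fin hW.ge, hW]

theorem card_submodule_finrank_mul {r : ℕ} (hr : r ≤ finrank K V) :
    Nat.card {W : Submodule K V // finrank K W = r} * ∏ j ∈ range r, (q ^ r - q ^ j) =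
      ∏ j ∈ range r, (q ^ finrank K V - q ^ j) := by
  let g : (Σ W : {W : Submodule K V // finrank K W = r}, (Fin r → K) ≃ₗ[K] W.1) →
      {f : (Fin r → K) →ₗ[K] V // Injective f} :=
    fun p => ⟨p.1.1.subtype ∘ₗ p.2.toLinearMap, p.1.1.injective_subtype.comp p.2.injective⟩
  have hg : Bijective g := by
    constructor
    · rintro ⟨⟨W₁, h₁⟩, e₁⟩ ⟨⟨W₂, h₂⟩, e₂⟩ heq
      have hf : W₁.subtype ∘ₗ e₁.toLinearMap = W₂.subtype ∘ₗ e₂.toLinearMap :=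
        congrArg Subtype.val heq
      obtain rfl : W₁ = W₂ := by
        simpa [LinearMap.range_comp, Submodule.map_top] using congrArg LinearMap.range hf
      obtain rfl : e₁ = e₂ := by
        ext x
        exact congrArg (fun f : (Fin r → K) →ₗ[K] V => f x) hf
      rfl
    · rintro ⟨f, hf⟩
      exact ⟨⟨⟨LinearMap.range f, (LinearMap.finrank_range_of_inj hf).trans (by simp)⟩,
        LinearEquiv.ofInjective f hf⟩, rfl⟩
  rw [← card_injective_linearMap_fin hr, ← Nat.card_congr (Equiv.ofBijective g hg)]
  exact (Nat.card_sigma_of_forall_card_eq fun W => card_linearEquiv (by simp) W.2).symm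

theorem card_submodule_finrank_sub_mul {r : ℕ} (hr : r ≤ finrank K V) :
    Nat.card {W : Submodule K V // finrank K W = finrank K V - r} * ∏ j ∈ range r, (q ^ r - q ^ j) =
      ∏ j ∈ range r, (q ^ finrank K V - q ^ j) := by
  have e : {W : Submodule K V // finrank K W = finrank K V - r} ≃
      {W : Submodule K (Dual K V) // finrank K W = r} :=
    ((Subspace.orderIsoFiniteDimensional (K := K) (V := V)).toEquiv.trans
      OrderDual.ofDual).subtypeEquiv fun W => by
        have := W.finrank_add_finrank_dualAnnihilator_eq
        change _ ↔ finrank K W.dualAnnihilator = r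
        omega
  rw [Nat.card_congr e, ← Subspace.dual_finrank_eq (K := K) (V := V)]
  exact card_submodule_finrank_mul (by rwa [Subspace.dual_finrank_eq])

theorem card_surjective_linearMap (hWV : finrank K W ≤ finrank K V) :
    Nat.card {f : V →ₗ[K] W // Surjective f} =
      ∏ j ∈ range (finrank K W), (q ^ finrank K V - q ^ j) := by
  let g : (Σ L : {L : Submodule K V // finrank K L = finrank K V - finrank K W},
      (V ⧸ L.1) ≃ₗ[K] W) → {f : V →ₗ[K] W // Surjective f} :=
    fun p => ⟨p.2.toLinearMap ∘ₗ p.1.1.mkQ, p.2.surjective.comp p.1.1.mkQ_surjective⟩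
  have hg : Bijective g := by
    constructor
    · rintro ⟨⟨L₁, h₁⟩, e₁⟩ ⟨⟨L₂, h₂⟩, e₂⟩ heq
      have hf : e₁.toLinearMap ∘ₗ L₁.mkQ = e₂.toLinearMap ∘ₗ L₂.mkQ := congrArg Subtype.val heq
      obtain rfl : L₁ = L₂ := by simpa [LinearMap.ker_comp] using congrArg LinearMap.ker hf
      obtain rfl : e₁ = e₂ := LinearEquiv.toLinearMap_injective (Submodule.linearMap_qext _ hf)
      rfl
    · rintro ⟨f, hf⟩
      have := f.finrank_range_add_finrank_ker
      rw [LinearMap.range_eq_top.mpr hf, finrank_top] at this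
      exact ⟨⟨⟨LinearMap.ker f, by omega⟩, f.quotKerEquivOfSurjective hf⟩, rfl⟩
  have (L : Submodule K V) : Finite (V ⧸ L) := Finite.of_surjective _ L.mkQ_surjective
  rw [← Nat.card_congr (Equiv.ofBijective g hg), ← card_submodule_finrank_sub_mul hWV]
  refine Nat.card_sigma_of_forall_card_eq fun L => card_linearEquiv ?_ rfl
  have := L.1.finrank_quotient_add_finrank
  omega

open Submodule in
theorem card_submodule_prod_map_eq_top_mul {d : ℕ} (hMd : finrank K M ≤ d) (hNd : finrank K N ≤ d)
    (hd : d ≤ finrank K M + finrank K N) :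
    Nat.card {V : Submodule K (M × N) // finrank K V = d ∧
        V.map (LinearMap.fst K M N) = ⊤ ∧ V.map (LinearMap.snd K M N) = ⊤} *
        ∏ j ∈ range (finrank K M + finrank K N - d), (q ^ (finrank K M + finrank K N - d) - q ^ j) =
      (∏ j ∈ range (finrank K M + finrank K N - d), (q ^ finrank K M - q ^ j)) *
        ∏ j ∈ range (finrank K M + finrank K N - d), (q ^ finrank K N - q ^ j) := by
  set k := finrank K M + finrank K N - d
  let g : (Σ L : {L : Submodule K N // finrank K L = d - finrank K M},
      {φ : M →ₗ[K] N ⧸ L.1 // Surjective φ}) →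
      {V : Submodule K (M × N) // finrank K V = d ∧
        V.map (LinearMap.fst K M N) = ⊤ ∧ V.map (LinearMap.snd K M N) = ⊤} :=
    fun p => ⟨graphMod p.1.1 p.2.1,
      by rw [finrank_eq_add_finrank_comap_inr map_fst_graphMod, comap_inr_graphMod, p.1.2]; omega,
      map_fst_graphMod, map_snd_graphMod.mpr p.2.2⟩
  have hg : Bijective g := by
    constructor
    · rintro ⟨⟨L₁, h₁⟩, φ₁, hφ₁⟩ ⟨⟨L₂, h₂⟩, φ₂, hφ₂⟩ heq
      have h : graphMod L₁ φ₁ = graphMod L₂ φ₂ := congrArg Subtype.val heq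
      obtain rfl : L₁ = L₂ := by
        simpa only [comap_inr_graphMod] using congrArg (comap (LinearMap.inr K M N)) h
      obtain rfl := graphMod_injective h
      rfl
    · rintro ⟨V, hdim, hfst, hsnd⟩
      obtain ⟨φ, hφ⟩ := exists_eq_graphMod hfst
      have := finrank_eq_add_finrank_comap_inr hfst
      exact ⟨⟨⟨V.comap (LinearMap.inr K M N), by omega⟩, φ, map_snd_graphMod.mp (hφ ▸ hsnd)⟩,
        Subtype.ext hφ.symm⟩
  have (L : Submodule K N) : Finite (N ⧸ L) := Finite.of_surjective _ L.mkQ_surjective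
  have hfib (L : {L : Submodule K N // finrank K L = d - finrank K M}) :
      Nat.card {φ : M →ₗ[K] N ⧸ L.1 // Surjective φ} =
        ∏ j ∈ range k, (q ^ finrank K M - q ^ j) := by
    have := L.1.finrank_quotient_add_finrank
    rw [card_surjective_linearMap (by omega), show finrank K (N ⧸ L.1) = k by omega]
  rw [← Nat.card_congr (Equiv.ofBijective g hg), Nat.card_sigma_of_forall_card_eq hfib,
    mul_right_comm, show d - finrank K M = finrank K N - k by omega,
    card_submodule_finrank_sub_mul (by omega), mul_comm]

theorem card_submodule_prod_eq_prod {A B : Type*} [AddCommGroup A] [Module K A] [Finite A]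
    [AddCommGroup B] [Module K B] [Finite B] (V₁ : Submodule K A) (V₂ : Submodule K B) {d : ℕ}
    (h₁ : finrank K V₁ ≤ d) (h₂ : finrank K V₂ ≤ d) (hd : d ≤ finrank K V₁ + finrank K V₂) :
    (Nat.card {V : Submodule K (A × B) // finrank K V = d ∧
        V.map (LinearMap.fst K A B) = V₁ ∧ V.map (LinearMap.snd K A B) = V₂} : ℚ) =
      ∏ j ∈ range (finrank K V₁ + finrank K V₂ - d),
        ((q : ℚ) ^ finrank K V₁ - q ^ j) * ((q : ℚ) ^ finrank K V₂ - q ^ j) /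
          ((q : ℚ) ^ (finrank K V₁ + finrank K V₂ - d) - q ^ j) := by
  have key := card_submodule_prod_map_eq_top_mul (K := K) (M := V₁) (N := V₂) h₁ h₂ hd
  have hq : 1 ≤ q := Fintype.card_pos
  have hne : ∏ j ∈ range (finrank K V₁ + finrank K V₂ - d),
      ((q : ℚ) ^ (finrank K V₁ + finrank K V₂ - d) - q ^ j) ≠ 0 :=
    prod_ne_zero_iff.mpr fun j hj => sub_ne_zero.mpr
      (pow_lt_pow_right₀ (by exact_mod_cast Fintype.one_lt_card) (mem_range.mp hj)).ne'
  rw [card_submodule_prod_eq_card_submodule_prod_top, prod_div_distrib, prod_mul_distrib,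
    eq_div_iff hne, ← Nat.cast_prod_pow_sub_pow hq le_rfl,
    ← Nat.cast_prod_pow_sub_pow hq (by omega), ← Nat.cast_prod_pow_sub_pow hq (by omega)]
  exact_mod_cast key

end Counting

lemma cast_Ncount_eq {n m i : ℕ} (hi : i ≤ n + m) :
    (Ncount n m i : ℚ) =
      2 ^ (n + m - i).choose 2 * qDescFactorial (2 : ℚ) n (n + m - i) *
        gaussBinom (2 : ℚ) m (n + m - i) := by
  by_cases h : n ≤ i ∧ m ≤ i
  · have := card_submodule_prod_eq_prod (d := i) (⊤ : Submodule (ZMod 2) (Fin n → ZMod 2))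
      (⊤ : Submodule (ZMod 2) (Fin m → ZMod 2)) (by simpa using h.1)
      (by simpa using h.2) (by simpa using hi)
    simp only [finrank_top, finrank_fin_fun, ZMod.card, Nat.cast_ofNat] at this
    rw [Ncount, this, prod_pow_sub_pow_mul_div_eq_mul_gaussBinom one_lt_two (by omega) (by omega)]
  · have hempty : Ncount n m i = 0 := by
      refine Nat.card_eq_zero.mpr (Or.inl ⟨fun ⟨V, hV, hfst, hsnd⟩ => ?_⟩)
      have h₁ := Submodule.finrank_map_le (LinearMap.fst (ZMod 2) _ _) V
      have h₂ := Submodule.finrank_map_le (LinearMap.snd (ZMod 2) _ _) V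
      rw [hfst, finrank_top, finrank_fin_fun] at h₁
      rw [hsnd, finrank_top, finrank_fin_fun] at h₂
      omega
    rw [hempty, Nat.cast_zero]
    rcases not_and_or.mp h with h | h
    · simp [gaussBinom_eq_zero_of_lt (2 : ℚ) (show m < n + m - i by omega)]
    · simp [qDescFactorial_eq_zero_of_lt (2 : ℚ) (show n < n + m - i by omega)]

/-- The count of `d`-dimensional subspaces of `𝔽₂^m ⊕ 𝔽₂^n` with prescribed projections
`V₁, V₂` of dimensions `d₁, d₂` is `∏_{j<d₁+d₂-d} (2^{d₁}-2^j)(2^{d₂}-2^j)/(2^{d₁+d₂-d}-2^j)`,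
and these counts satisfy Grushevsky's alternating identity. -/
theorem stmt19 :
    (∀ (m n d1 d2 d : ℕ), d1 ≤ d → d2 ≤ d → d ≤ d1 + d2 →
      ∀ (V1 : Submodule (ZMod 2) (Fin m → ZMod 2)) (V2 : Submodule (ZMod 2) (Fin n → ZMod 2)),
        Module.finrank (ZMod 2) V1 = d1 → Module.finrank (ZMod 2) V2 = d2 →
        (Nat.card {V : Submodule (ZMod 2) ((Fin m → ZMod 2) × (Fin n → ZMod 2)) //
            Module.finrank (ZMod 2) V = d ∧
            Submodule.map (LinearMap.fst (ZMod 2) (Fin m → ZMod 2) (Fin n → ZMod 2)) V = V1 ∧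
            Submodule.map (LinearMap.snd (ZMod 2) (Fin m → ZMod 2) (Fin n → ZMod 2)) V = V2} : ℚ)
          = ∏ j ∈ Finset.range (d1 + d2 - d),
              ((2 : ℚ) ^ d1 - 2 ^ j) * ((2 : ℚ) ^ d2 - 2 ^ j) / ((2 : ℚ) ^ (d1 + d2 - d) - 2 ^ j)) ∧
    (∀ n m : ℕ,
      (-1 : ℚ) ^ n * 2 ^ (n * (n - 1) / 2) * ((-1 : ℚ) ^ m * 2 ^ (m * (m - 1) / 2))
        = ∑ i ∈ Finset.range (n + m + 1),
            (-1 : ℚ) ^ i * 2 ^ (i * (i - 1) / 2) * (Ncount n m i : ℚ)) := by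
  refine ⟨fun m n d1 d2 d h1 h2 hd V1 V2 hV1 hV2 => ?_, fun n m => ?_⟩
  · subst hV1 hV2
    simpa using card_submodule_prod_eq_prod V1 V2 h1 h2 hd
  · simp_rw [← Nat.choose_two_right]
    rw [← alternating_sum_pow_choose_two_mul (2 : ℚ) n m, ← sum_range_reflect]
    refine sum_congr rfl fun k hk => ?_
    have hk : k ≤ n + m := Nat.lt_succ_iff.mp (mem_range.mp hk)
    rw [show n + m + 1 - 1 - k = n + m - k by omega, Nat.sub_sub_self hk, cast_Ncount_eq hk]
end
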